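/- arXiv:2507.05772 — 7 statements merged into one kernel-verified Lean document; each statement's English description precedes it below -/
import Mathlib

section
/- If u is continuous on (0,b], admits a generalized Taylor expansion at 0 with exponent set A(u), and -1 ∉ A(u), then the function U(x) = ∫_x^b u(y) dy admits a generalized Taylor expansion at 0 with exponent set {α + 1 : α ∈ A(u)} ∪ {0}. -/
open Set Finset

/-- A continuous function `u` on `(0,b]` admits a generalized Taylor expansion at `0`
with exponent set `A` (a discrete set bounded from below) and coefficients `a`:
for every `N` there is `C_N` with `|u x - ∑_{α ∈ A, α < N} a α x^α| ≤ C_N x^N` on `(0,b]`. -/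
def HasGTE (b : ℝ) (u : ℝ → ℂ) (A : Set ℝ) (a : ℝ → ℂ) : Prop :=
  BddBelow A ∧
  ∀ N : ℕ, ∃ (s : Finset ℝ) (C : ℝ), (↑s : Set ℝ) = A ∩ Set.Iio (N : ℝ) ∧
    ∀ x ∈ Set.Ioc (0 : ℝ) b,
      ‖u x - ∑ α ∈ s, a α * ((x ^ α : ℝ) : ℂ)‖ ≤ C * x ^ (N : ℝ)

/-!
Subtracting from `u` its expansion terms of order `< N` leaves a remainder `R_N = O(y^N)`, which is
integrable at `0`. Integrating the power terms one by one gives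
`∫_x^b u = κ - ∑ a_α x^(α+1)/(α+1) - ∫_0^x R_N` with `∫_0^x R_N = O(x^(N+1))`, where `κ` is the
Hadamard finite part of `∫_0^b u`. It is the same for every `N`, because raising `N` only moves
terms with exponent `α ≥ 0`, which are integrable at `0`, from the remainder into the sum. The
terms with `α + 1 ≥ N` are `O(x^N)` and are absorbed into the error.
-/

open MeasureTheory intervalIntegral

noncomputable def powerSum (a : ℝ → ℂ) (s : Finset ℝ) (x : ℝ) : ℂ :=
  ∑ α ∈ s, a α * ((x ^ α : ℝ) : ℂ)

noncomputable def primitiveCoeff (a : ℝ → ℂ) (β : ℝ) : ℂ := a (β - 1) / β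

section powerSum

variable {a : ℝ → ℂ} {s t : Finset ℝ} {x y : ℝ}

lemma powerSum_neg : powerSum (-a) s x = -powerSum a s x := by
  simp only [powerSum, Pi.neg_apply, neg_mul, Finset.sum_neg_distrib]

lemma powerSum_sdiff_add (h : s ⊆ t) : powerSum a (t \ s) x + powerSum a s x = powerSum a t x :=
  Finset.sum_sdiff h

lemma powerSum_apply_zero (h : (0 : ℝ) ∉ s) : powerSum a s 0 = 0 :=
  Finset.sum_eq_zero fun α hα => by
    rw [Real.zero_rpow (ne_of_mem_of_not_mem hα h), Complex.ofReal_zero, mul_zero]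

lemma powerSum_update_insert_zero (c : ℂ) (h : (0 : ℝ) ∉ s) :
    powerSum (Function.update a 0 c) (insert 0 s) x = c + powerSum a s x := by
  rw [powerSum, Finset.sum_insert h, Function.update_self, Real.rpow_zero, Complex.ofReal_one,
    mul_one]
  exact congrArg (c + ·) <| Finset.sum_congr rfl fun α hα => by
    rw [Function.update_of_ne (ne_of_mem_of_not_mem hα h)]

lemma continuousOn_powerSum : ContinuousOn (powerSum a s) (Ioi 0) := by
  refine continuousOn_finsetSum s fun α _ y hy => ContinuousAt.continuousWithinAt ?_
  exact continuousAt_const.mul <| Complex.continuous_ofReal.continuousAt.comp <|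
    Real.continuousAt_rpow_const y α (Or.inl (ne_of_gt hy))

lemma intervalIntegrable_monomial (c : ℂ) {α : ℝ} (h : -1 < α ∨ (0 : ℝ) ∉ uIcc x y) :
    IntervalIntegrable (fun t => c * ((t ^ α : ℝ) : ℂ)) volume x y := by
  have hrpow : IntervalIntegrable (fun t : ℝ => t ^ α) volume x y :=
    h.elim intervalIntegrable_rpow' fun h0 => intervalIntegrable_rpow (Or.inr h0)
  exact ⟨hrpow.1.ofReal.const_mul c, hrpow.2.ofReal.const_mul c⟩

lemma intervalIntegrable_powerSum (h : ∀ α ∈ s, -1 < α ∨ (0 : ℝ) ∉ uIcc x y) :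
    IntervalIntegrable (powerSum a s) volume x y := by
  have hsum := IntervalIntegrable.sum s fun α hα => intervalIntegrable_monomial (a α) (h α hα)
  rw [Finset.sum_fn] at hsum
  exact hsum

lemma integral_powerSum (h : ∀ α ∈ s, -1 < α ∨ α ≠ -1 ∧ (0 : ℝ) ∉ uIcc x y) :
    ∫ t in x..y, powerSum a s t =
      powerSum (primitiveCoeff a) (s.image (· + 1)) y -
        powerSum (primitiveCoeff a) (s.image (· + 1)) x := by
  have hint : ∀ α ∈ s, IntervalIntegrable (fun t => a α * ((t ^ α : ℝ) : ℂ)) volume x y :=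
    fun α hα => intervalIntegrable_monomial (a α) ((h α hα).imp_right And.right)
  simp only [powerSum]
  rw [integral_finsetSum hint, Finset.sum_image (fun _ _ _ _ => add_right_cancel),
    Finset.sum_image (fun _ _ _ _ => add_right_cancel), ← Finset.sum_sub_distrib]
  refine Finset.sum_congr rfl fun α hα => ?_
  rw [intervalIntegral.integral_const_mul, integral_ofReal, integral_rpow (h α hα),
    primitiveCoeff, add_sub_cancel_right]
  push_cast
  ring

lemma norm_powerSum_le {b r : ℝ} (hs : ∀ β ∈ s, r ≤ β) (hx : x ∈ Ioc 0 b) :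
    ‖powerSum a s x‖ ≤ (∑ β ∈ s, ‖a β‖ * b ^ (β - r)) * x ^ r := by
  rw [Finset.sum_mul]
  refine (norm_sum_le _ _).trans (Finset.sum_le_sum fun β hβ => ?_)
  have hx0 := hx.1.le
  rw [norm_mul, Complex.norm_real, Real.norm_of_nonneg (Real.rpow_nonneg hx0 β), mul_assoc]
  gcongr
  calc x ^ β = x ^ (β - r) * x ^ r := by rw [← Real.rpow_add hx.1, sub_add_cancel]
    _ ≤ b ^ (β - r) * x ^ r := by
      gcongr
      exacts [by linarith [hs β hβ], hx.2]

end powerSum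

lemma hasGTE_of_expansion {b : ℝ} {f a : ℝ → ℂ} {A : Set ℝ} (hA : BddBelow A)
    (h : ∀ N : ℕ, ∃ (S : Finset ℝ) (C : ℝ), ↑S ∩ Iio (N : ℝ) = A ∩ Iio (N : ℝ) ∧
      ∀ x ∈ Ioc 0 b, ‖f x - powerSum a S x‖ ≤ C * x ^ (N : ℝ)) :
    HasGTE b f A a := by
  refine ⟨hA, fun N => ?_⟩
  obtain ⟨S, C, hS, hC⟩ := h N
  classical
  refine ⟨S.filter (· < (N : ℝ)), C + ∑ β ∈ S.filter (¬ · < (N : ℝ)), ‖a β‖ * b ^ (β - N),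
    by rw [← hS, Finset.coe_filter]; rfl, fun x hx => ?_⟩
  have hsplit := Finset.sum_filter_add_sum_filter_not S (· < (N : ℝ))
    fun β => a β * ((x ^ β : ℝ) : ℂ)
  calc ‖f x - ∑ β ∈ S.filter (· < (N : ℝ)), a β * ((x ^ β : ℝ) : ℂ)‖
      = ‖(f x - powerSum a S x) + powerSum a (S.filter (¬ · < (N : ℝ))) x‖ := by
        rw [powerSum, powerSum, ← hsplit]; ring_nf
    _ ≤ C * x ^ (N : ℝ) + (∑ β ∈ S.filter (¬ · < (N : ℝ)), ‖a β‖ * b ^ (β - N)) * x ^ (N : ℝ) :=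
        (norm_add_le _ _).trans <| add_le_add (hC x hx) <|
          norm_powerSum_le (fun β hβ => not_lt.1 (Finset.mem_filter.1 hβ).2) hx
    _ = _ := by ring

lemma coe_insert_zero_image_add_one_inter_Iio {s : Finset ℝ} {A : Set ℝ} {r : ℝ}
    (hs : (↑s : Set ℝ) = A ∩ Iio r) :
    ↑(insert 0 (s.image (· + 1))) ∩ Iio r = ((fun α => α + 1) '' A ∪ {0}) ∩ Iio r := by
  ext β
  simp only [Finset.coe_insert, Finset.coe_image, hs, mem_inter_iff, mem_insert_iff, mem_image,
    mem_union, mem_singleton_iff, Set.mem_Iio]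
  constructor
  · rintro ⟨rfl | ⟨α, ⟨hα, -⟩, rfl⟩, hβ⟩
    exacts [⟨Or.inr rfl, hβ⟩, ⟨Or.inl ⟨α, hα, rfl⟩, hβ⟩]
  · rintro ⟨⟨α, hα, rfl⟩ | rfl, hβ⟩
    exacts [⟨Or.inr ⟨α, ⟨hα, by linarith⟩, rfl⟩, hβ⟩, ⟨Or.inl rfl, hβ⟩]

section remainder

variable {f : ℝ → ℂ} {C r : ℝ}

lemma intervalIntegrable_of_norm_le_rpow {b : ℝ} (hb : 0 ≤ b) (hr : -1 < r)
    (hf : ContinuousOn f (Ioc 0 b)) (h : ∀ y ∈ Ioc 0 b, ‖f y‖ ≤ C * y ^ r) :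
    IntervalIntegrable f volume 0 b := by
  refine ((intervalIntegrable_rpow' hr).const_mul C).mono_fun' ?_ ?_
  · rw [uIoc_of_le hb]
    exact hf.aestronglyMeasurable measurableSet_Ioc
  · rw [uIoc_of_le hb]
    exact (ae_restrict_iff' measurableSet_Ioc).mpr (ae_of_all _ h)

lemma norm_integral_le_of_norm_le_rpow {x : ℝ} (hx : 0 ≤ x) (hr : -1 < r)
    (h : ∀ y ∈ Ioc 0 x, ‖f y‖ ≤ C * y ^ r) :
    ‖∫ y in 0..x, f y‖ ≤ C * x ^ (r + 1) / (r + 1) := by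
  calc ‖∫ y in 0..x, f y‖ ≤ ∫ y in 0..x, C * y ^ r :=
        norm_integral_le_of_norm_le hx (ae_of_all _ h) ((intervalIntegrable_rpow' hr).const_mul C)
    _ = C * x ^ (r + 1) / (r + 1) := by
        rw [intervalIntegral.integral_const_mul, integral_rpow (Or.inl hr),
          Real.zero_rpow (by linarith), sub_zero, mul_div_assoc]

lemma mul_rpow_add_one_div_le {b x : ℝ} (hC : 0 ≤ C) (hr : 0 ≤ r) (hx : x ∈ Ioc 0 b) :
    C * x ^ (r + 1) / (r + 1) ≤ C * b * x ^ r := by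
  have hxr := Real.rpow_nonneg hx.1.le r
  rw [Real.rpow_add_one hx.1.ne']
  calc _ ≤ C * (x ^ r * x) := div_le_self (mul_nonneg hC (mul_nonneg hxr hx.1.le)) (by linarith)
    _ ≤ C * b * x ^ r := by nlinarith [mul_le_mul_of_nonneg_left hx.2 hC]

end remainder

/-- Hadamard's finite part of `∫_0^b u`: each term `a α y^α` with `α ∈ s` is integrated to
`a α b^(α+1)/(α+1)`, even when it is not integrable at `0`. -/
noncomputable def finitePart (b : ℝ) (u a : ℝ → ℂ) (s : Finset ℝ) : ℂ :=
  (∫ y in 0..b, u y - powerSum a s y) + powerSum (primitiveCoeff a) (s.image (· + 1)) b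

section finitePart

variable {b x : ℝ} {u a : ℝ → ℂ} {s t : Finset ℝ}

lemma finitePart_eq_of_subset (hst : s ⊆ t) (ht : ∀ α ∈ t \ s, -1 < α)
    (hint : IntervalIntegrable (fun y => u y - powerSum a t y) volume 0 b) :
    finitePart b u a s = finitePart b u a t := by
  classical
  have h0 : (0 : ℝ) ∉ (t \ s).image (· + 1) := by
    simp only [Finset.mem_image, not_exists, not_and]
    intro α hα h
    linarith [ht α hα]
  have hsplit : (fun y => u y - powerSum a s y) =
      fun y => (u y - powerSum a t y) + powerSum a (t \ s) y := by
    ext y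
    rw [← powerSum_sdiff_add hst]
    ring
  rw [finitePart, finitePart, hsplit,
    integral_add hint (intervalIntegrable_powerSum fun α hα => Or.inl (ht α hα)),
    integral_powerSum fun α hα => Or.inl (ht α hα), powerSum_apply_zero h0, sub_zero,
    Finset.image_sdiff _ _ (add_left_injective 1), add_assoc,
    powerSum_sdiff_add (Finset.image_subset_image hst)]

lemma integral_eq_finitePart_sub (hs : (-1 : ℝ) ∉ s)
    (hint : IntervalIntegrable (fun y => u y - powerSum a s y) volume 0 b) (hx : x ∈ Ioc 0 b) :
    ∫ y in x..b, u y = finitePart b u a s - powerSum (primitiveCoeff a) (s.image (· + 1)) x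
      - ∫ y in 0..x, u y - powerSum a s y := by
  have h0 : (0 : ℝ) ∉ uIcc x b := by
    rw [uIcc_of_le hx.2]
    exact fun h => hx.1.not_ge h.1
  have hx' : x ∈ uIcc 0 b := Icc_subset_uIcc ⟨hx.1.le, hx.2⟩
  have hR0x := hint.mono_set (uIcc_subset_uIcc left_mem_uIcc hx')
  have hRxb := hint.mono_set (uIcc_subset_uIcc hx' right_mem_uIcc)
  calc ∫ y in x..b, u y
      = (∫ y in x..b, u y - powerSum a s y) + ∫ y in x..b, powerSum a s y := by
        rw [← integral_add hRxb (intervalIntegrable_powerSum fun _ _ => Or.inr h0)]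
        simp only [sub_add_cancel]
    _ = _ := by
        rw [← integral_interval_sub_left hint hR0x,
          integral_powerSum fun α hα => Or.inr ⟨ne_of_mem_of_not_mem hα hs, h0⟩, finitePart]
        ring

lemma norm_integral_sub_powerSum_le {C r : ℝ} (hs : (-1 : ℝ) ∉ s) (hr : -1 < r)
    (hint : IntervalIntegrable (fun y => u y - powerSum a s y) volume 0 b)
    (hR : ∀ y ∈ Ioc 0 b, ‖u y - powerSum a s y‖ ≤ C * y ^ r) (hx : x ∈ Ioc 0 b) :
    ‖(∫ y in x..b, u y) - powerSum (Function.update (-primitiveCoeff a) 0 (finitePart b u a s))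
      (insert 0 (s.image (· + 1))) x‖ ≤ C * x ^ (r + 1) / (r + 1) := by
  have h0 : (0 : ℝ) ∉ s.image (· + 1) := by
    simp only [Finset.mem_image, not_exists, not_and]
    intro α hα h
    exact hs ((by linarith : α = -1) ▸ hα)
  rw [powerSum_update_insert_zero _ h0, powerSum_neg, integral_eq_finitePart_sub hs hint hx,
    ← norm_neg]
  calc _ = ‖∫ y in 0..x, u y - powerSum a s y‖ := by congr 1; ring
    _ ≤ C * x ^ (r + 1) / (r + 1) :=
      norm_integral_le_of_norm_le_rpow hx.1.le hr fun y hy => hR y ⟨hy.1, hy.2.trans hx.2⟩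

end finitePart

open MeasureTheory in
/-- If `u` has a generalized Taylor expansion with `-1 ∉ A(u)`, then
`U(x) = ∫_x^b u(y) dy` has a generalized Taylor expansion with exponent set
`{α + 1 : α ∈ A(u)} ∪ {0}`. -/
theorem gte_integral (b : ℝ) (hb : 0 < b) (u : ℝ → ℂ)
    (hu : ContinuousOn u (Set.Ioc 0 b))
    (Au : Set ℝ) (au : ℝ → ℂ) (hgu : HasGTE b u Au au) (hm1 : (-1 : ℝ) ∉ Au) :
    ∃ a : ℝ → ℂ,
      HasGTE b (fun x => ∫ y in x..b, u y) (((fun α => α + 1) '' Au) ∪ {0}) a := by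
  obtain ⟨hbdd, hexp⟩ := hgu
  choose s C hs hC using hexp
  have mem_s {N : ℕ} {α : ℝ} : α ∈ s N ↔ α ∈ Au ∧ α < N := by
    rw [← Finset.mem_coe, hs N]; rfl
  have hN (N : ℕ) : (-1 : ℝ) < N := by linarith [N.cast_nonneg (α := ℝ)]
  have hint (N : ℕ) : IntervalIntegrable (fun y => u y - powerSum au (s N) y) volume 0 b :=
    intervalIntegrable_of_norm_le_rpow hb.le (hN N)
      (hu.sub (continuousOn_powerSum.mono fun _ hy => hy.1)) (hC N)
  refine ⟨Function.update (-primitiveCoeff au) 0 (finitePart b u au (s 0)),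
    hasGTE_of_expansion ((monotone_id.add_const 1).map_bddBelow hbdd |>.union bddBelow_singleton)
      fun N => ⟨insert 0 ((s N).image (· + 1)), C N * b,
        coe_insert_zero_image_add_one_inter_Iio (hs N), fun x hx => ?_⟩⟩
  have hC0 : 0 ≤ C N := nonneg_of_mul_nonneg_left
    ((norm_nonneg _).trans (hC N b ⟨hb, le_rfl⟩)) (Real.rpow_pos_of_pos hb _)
  have hκ : finitePart b u au (s 0) = finitePart b u au (s N) := by
    refine finitePart_eq_of_subset
      (fun α hα => mem_s.2 ⟨(mem_s.1 hα).1, (mem_s.1 hα).2.trans_le (Nat.cast_le.2 N.zero_le)⟩)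
      (fun α hα => ?_) (hint N)
    obtain ⟨hαN, hα0⟩ := Finset.mem_sdiff.1 hα
    have : 0 ≤ α := not_lt.1 fun h => hα0 (mem_s.2 ⟨(mem_s.1 hαN).1, by exact_mod_cast h⟩)
    linarith
  rw [hκ]
  exact (norm_integral_sub_powerSum_le (fun h => hm1 (mem_s.1 h).1) (hN N) (hint N) (hC N) hx).trans
    (mul_rpow_add_one_div_le hC0 N.cast_nonneg hx)
end

section
/- If u is continuous on (0,b], admits a generalized Taylor expansion at 0, and u is not O(x^∞) as x → 0, then min{α ∈ A(u) : a_α ≠ 0} = sup{α ∈ ℝ : lim_{x→0} x^{-α} u(x) = 0}, so the leading exponent with nonzero coefficient is uniquely determined by u. -/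
open Set Finset

/-! The finite part `∑_{α < N} a α x^α` of the expansion, divided by `x^{α₀}`, tends to `a α₀`
because every other exponent carrying a nonzero coefficient exceeds `α₀`; the remainder, divided
by `x^{α₀}`, is `O(x^{N - α₀})` and tends to `0`. Hence `x^{-α₀} u(x) → a α₀ ≠ 0`, and multiplying
by `x^{α₀ - α}` shows that `x^{-α} u(x) → 0` exactly when `α < α₀`. -/

open Filter Topology

lemma tendsto_rpow_nhdsGT_zero {p : ℝ} (hp : 0 < p) :
    Tendsto (fun x : ℝ => x ^ p) (𝓝[>] 0) (𝓝 0) := by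
  simpa [ContinuousWithinAt, Real.zero_rpow hp.ne'] using
    (Real.continuousAt_rpow_const 0 p (Or.inr hp.le)).continuousWithinAt (s := Ioi 0)

lemma tendsto_ofReal_rpow_nhdsGT_zero {p : ℝ} (hp : 0 < p) :
    Tendsto (fun x : ℝ => ((x ^ p : ℝ) : ℂ)) (𝓝[>] 0) (𝓝 0) := by
  simpa using (tendsto_rpow_nhdsGT_zero hp).ofReal

lemma rpow_neg_mul_eventuallyEq (u : ℝ → ℂ) (α β : ℝ) :
    (fun x : ℝ => ((x ^ (-α) : ℝ) : ℂ) * u x) =ᶠ[𝓝[>] 0]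
      fun x => ((x ^ (β - α) : ℝ) : ℂ) * (((x ^ (-β) : ℝ) : ℂ) * u x) := by
  filter_upwards [self_mem_nhdsWithin] with x (hx : 0 < x)
  rw [← mul_assoc, ← Complex.ofReal_mul, ← Real.rpow_add hx, sub_add_eq_add_sub, add_neg_cancel,
    zero_sub]

lemma tendsto_rpow_neg_mul_zero_of_lt {u : ℝ → ℂ} {α β : ℝ} {c : ℂ} (hαβ : α < β)
    (h : Tendsto (fun x : ℝ => ((x ^ (-β) : ℝ) : ℂ) * u x) (𝓝[>] 0) (𝓝 c)) :
    Tendsto (fun x : ℝ => ((x ^ (-α) : ℝ) : ℂ) * u x) (𝓝[>] 0) (𝓝 0) := by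
  refine Tendsto.congr' (rpow_neg_mul_eventuallyEq u α β).symm ?_
  simpa using (tendsto_ofReal_rpow_nhdsGT_zero (sub_pos.2 hαβ)).mul h

lemma setOf_tendsto_rpow_neg_mul_eq_Iio {u : ℝ → ℂ} {α₀ : ℝ} {c : ℂ} (hc : c ≠ 0)
    (h : Tendsto (fun x : ℝ => ((x ^ (-α₀) : ℝ) : ℂ) * u x) (𝓝[>] 0) (𝓝 c)) :
    {α : ℝ | Tendsto (fun x : ℝ => ((x ^ (-α) : ℝ) : ℂ) * u x) (𝓝[>] 0) (𝓝 0)} = Iio α₀ := by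
  ext α
  rw [Set.mem_Iio]
  refine ⟨fun hα => ?_, fun hα => tendsto_rpow_neg_mul_zero_of_lt hα h⟩
  by_contra hle
  have h₀ : Tendsto (fun x : ℝ => ((x ^ (-α₀) : ℝ) : ℂ) * u x) (𝓝[>] 0) (𝓝 0) := by
    rcases (not_lt.1 hle).eq_or_lt with rfl | hlt
    · exact hα
    · exact tendsto_rpow_neg_mul_zero_of_lt hlt hα
  exact hc (tendsto_nhds_unique h h₀)

lemma tendsto_sum_mul_rpow_sub {s : Finset ℝ} {a : ℝ → ℂ} {α₀ : ℝ} (hα₀ : α₀ ∈ s)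
    (hmin : ∀ β ∈ s, a β ≠ 0 → α₀ ≤ β) :
    Tendsto (fun x : ℝ => ∑ β ∈ s, a β * ((x ^ (β - α₀) : ℝ) : ℂ)) (𝓝[>] 0) (𝓝 (a α₀)) := by
  rw [← Finset.sum_ite_eq_of_mem' s α₀ a hα₀]
  refine tendsto_finsetSum s fun β hβ => ?_
  split_ifs with hβα₀
  · subst hβα₀
    simp
  · by_cases haβ : a β = 0
    · simp [haβ]
    · have hlt : α₀ < β := (hmin β hβ haβ).lt_of_ne (Ne.symm hβα₀)
      simpa using (tendsto_ofReal_rpow_nhdsGT_zero (sub_pos.2 hlt)).const_mul (a β)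

lemma tendsto_rpow_neg_mul_zero_of_norm_le {b C α N : ℝ} {v : ℝ → ℂ} (hb : 0 < b) (hαN : α < N)
    (hv : ∀ x ∈ Ioc 0 b, ‖v x‖ ≤ C * x ^ N) :
    Tendsto (fun x : ℝ => ((x ^ (-α) : ℝ) : ℂ) * v x) (𝓝[>] 0) (𝓝 0) := by
  refine squeeze_zero_norm' (a := fun x => C * x ^ (N - α)) ?_ ?_
  · filter_upwards [Ioo_mem_nhdsGT hb] with x hx
    have hxα : 0 ≤ x ^ (-α) := Real.rpow_nonneg hx.1.le _
    calc ‖((x ^ (-α) : ℝ) : ℂ) * v x‖ = x ^ (-α) * ‖v x‖ := by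
          rw [norm_mul, Complex.norm_real, Real.norm_of_nonneg hxα]
      _ ≤ x ^ (-α) * (C * x ^ N) := mul_le_mul_of_nonneg_left (hv x ⟨hx.1, hx.2.le⟩) hxα
      _ = C * x ^ (N - α) := by
          rw [sub_eq_neg_add, Real.rpow_add hx.1]
          ring
  · simpa using (tendsto_rpow_nhdsGT_zero (sub_pos.2 hαN)).const_mul C

lemma HasGTE.tendsto_rpow_neg_mul {b : ℝ} {u : ℝ → ℂ} {A : Set ℝ} {a : ℝ → ℂ} {α₀ : ℝ}
    (hg : HasGTE b u A a) (hb : 0 < b) (hmin : IsLeast {α | α ∈ A ∧ a α ≠ 0} α₀) :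
    Tendsto (fun x : ℝ => ((x ^ (-α₀) : ℝ) : ℂ) * u x) (𝓝[>] 0) (𝓝 (a α₀)) := by
  obtain ⟨N, hN⟩ := exists_nat_gt α₀
  obtain ⟨s, C, hs, hC⟩ := hg.2 N
  have hmem : ∀ {β}, β ∈ s ↔ β ∈ A ∧ β < N := by
    intro β
    rw [← Finset.mem_coe, hs]
    rfl
  have hsum := tendsto_sum_mul_rpow_sub (hmem.2 ⟨hmin.1.1, hN⟩)
    fun β hβ haβ => hmin.2 ⟨(hmem.1 hβ).1, haβ⟩
  have hrem := tendsto_rpow_neg_mul_zero_of_norm_le hb hN hC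
  refine (zero_add (a α₀) ▸ hrem.add hsum).congr' ?_
  filter_upwards [self_mem_nhdsWithin] with x (hx : 0 < x)
  simp_rw [sub_eq_neg_add _ α₀, Real.rpow_add hx, Complex.ofReal_mul,
    mul_left_comm _ ((x ^ (-α₀) : ℝ) : ℂ), ← Finset.mul_sum]
  ring

theorem gte_leading_exponent_general (b : ℝ) (hb : 0 < b) (u : ℝ → ℂ)
    (A : Set ℝ) (a : ℝ → ℂ) (hg : HasGTE b u A a)
    (α₀ : ℝ) (hmin : IsLeast {α | α ∈ A ∧ a α ≠ 0} α₀) :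
    α₀ = sSup {α : ℝ | Filter.Tendsto (fun x : ℝ => ((x ^ (-α) : ℝ) : ℂ) * u x)
      (nhdsWithin 0 (Set.Ioi 0)) (nhds 0)} := by
  rw [setOf_tendsto_rpow_neg_mul_eq_Iio hmin.1.2 (hg.tendsto_rpow_neg_mul hb hmin), csSup_Iio]

/-- If `u` has a generalized Taylor expansion and is not `O(x^∞)` at `0`, then the
least exponent with nonzero coefficient equals
`sup {α : x^{-α} u(x) → 0 as x → 0⁺}`; in particular it is determined by `u`. -/
theorem gte_leading_exponent (b : ℝ) (hb : 0 < b) (u : ℝ → ℂ)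
    (hu : ContinuousOn u (Set.Ioc 0 b))
    (A : Set ℝ) (a : ℝ → ℂ) (hg : HasGTE b u A a)
    (hnot : ¬ ∀ N : ℕ, ∃ C : ℝ, ∀ x ∈ Set.Ioc (0 : ℝ) b,
      ‖u x‖ ≤ C * x ^ (N : ℝ))
    (α₀ : ℝ) (hmin : IsLeast {α | α ∈ A ∧ a α ≠ 0} α₀) :
    α₀ = sSup {α : ℝ | Filter.Tendsto (fun x : ℝ => ((x ^ (-α) : ℝ) : ℂ) * u x)
      (nhdsWithin 0 (Set.Ioi 0)) (nhds 0)} :=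
  gte_leading_exponent_general b hb u A a hg α₀ hmin
end

section
/- Let u be continuous on (0,b] admitting a generalized Taylor expansion at 0 with exponent set A(u). Suppose α₀ = min{α ∈ A(u) \ {0} : a_α ≠ 0} satisfies α₀ ≥ 0, that 0 ∈ A(u), and a_0 ≠ 0. Then there exists a continuous function v on [0,b] such that u(x) = (1 + x^{α₀}) v(x) for all x ∈ (0,b]. -/
/-!
Every exponent `α ≠ 0` with `a α ≠ 0` is at least `α₀ ≥ 0`, hence positive, so the expansion
to order `1` shows `u x → a 0` as `x → 0⁺`. Since `1 + x^α₀` is continuous and nonvanishing on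
`[0, b]`, the quotient `u x / (1 + x^α₀)`, extended by `a 0` at `0`, is the required `v`.
-/

open Set Finset

open Filter Topology

theorem exists_continuousOn_Icc_eq_mul {𝕜 : Type*} [NormedField 𝕜] {a b : ℝ} {L : 𝕜}
    {u f : ℝ → 𝕜} (hu : ContinuousOn u (Ioc a b)) (hlim : Tendsto u (𝓝[Ioc a b] a) (𝓝 L))
    (hf : ContinuousOn f (Icc a b)) (hf0 : ∀ x ∈ Icc a b, f x ≠ 0) :
    ∃ v, ContinuousOn v (Icc a b) ∧ ∀ x ∈ Ioc a b, u x = f x * v x := by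
  classical
  refine ⟨Function.update (u / f) a (L / f a), ?_, fun x hx => ?_⟩
  · rw [continuousOn_update_iff, Icc_sdiff_left]
    refine ⟨hu.div (hf.mono Ioc_subset_Icc_self) fun x hx => hf0 x (Ioc_subset_Icc_self hx), fun ha => ?_⟩
    exact hlim.div ((hf a ha).mono Ioc_subset_Icc_self) (hf0 a ha)
  · rw [Function.update_of_ne hx.1.ne', Pi.div_apply,
      mul_div_cancel₀ _ (hf0 x (Ioc_subset_Icc_self hx))]

theorem tendsto_ofReal_rpow_nhdsWithin_zero {α : ℝ} (hα : 0 < α) (s : Set ℝ) :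
    Tendsto (fun x : ℝ => ((x ^ α : ℝ) : ℂ)) (𝓝[s] 0) (𝓝 0) := by
  have h := (Complex.continuous_ofReal.comp (Real.continuous_rpow_const hα.le)).tendsto 0
  simp only [Function.comp_def, Real.zero_rpow hα.ne', Complex.ofReal_zero] at h
  exact h.mono_left nhdsWithin_le_nhds

theorem HasGTE.tendsto_nhdsWithin_zero {b : ℝ} {u : ℝ → ℂ} {A : Set ℝ} {a : ℝ → ℂ}
    (hg : HasGTE b u A a) (h0A : (0 : ℝ) ∈ A) (hpos : ∀ α ∈ A, α ≠ 0 → a α ≠ 0 → 0 < α) :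
    Tendsto u (𝓝[Ioc 0 b] 0) (𝓝 (a 0)) := by
  obtain ⟨s, C, hs, hbound⟩ := hg.2 1
  have hsA : ∀ α ∈ s, α ∈ A := fun α hα => (hs ▸ Finset.mem_coe.2 hα : α ∈ A ∩ _).1
  have h0s : (0 : ℝ) ∈ s := by
    rw [← Finset.mem_coe, hs]; exact ⟨h0A, by norm_num⟩
  have hrem : Tendsto (fun x : ℝ => u x - ∑ α ∈ s, a α * ((x ^ α : ℝ) : ℂ))
      (𝓝[Ioc 0 b] 0) (𝓝 0) := by
    refine squeeze_zero_norm' (a := fun x => C * x) ?_ ?_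
    · filter_upwards [self_mem_nhdsWithin] with x hx
      simpa using hbound x hx
    · simpa using ((continuous_const_mul C).tendsto 0).mono_left nhdsWithin_le_nhds
  have hterm : ∀ α ∈ s.erase 0, Tendsto (fun x : ℝ => a α * ((x ^ α : ℝ) : ℂ))
      (𝓝[Ioc 0 b] 0) (𝓝 0) := by
    intro α hα
    obtain ⟨hα0, hαs⟩ := Finset.mem_erase.1 hα
    by_cases haα : a α = 0
    · simpa [haα] using tendsto_const_nhds
    · have hα := hpos α (hsA α hαs) hα0 haα
      simpa using (tendsto_ofReal_rpow_nhdsWithin_zero hα _).const_mul (a α)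
  have hsum : Tendsto (fun x : ℝ => ∑ α ∈ s, a α * ((x ^ α : ℝ) : ℂ))
      (𝓝[Ioc 0 b] 0) (𝓝 (a 0)) := by
    simp_rw [← Finset.add_sum_erase s _ h0s, Real.rpow_zero, Complex.ofReal_one, mul_one]
    simpa using (tendsto_finsetSum _ hterm).const_add (a 0)
  simpa using hrem.add hsum

theorem gte_factorization_general (b : ℝ) (u : ℝ → ℂ)
    (hu : ContinuousOn u (Set.Ioc 0 b))
    (A : Set ℝ) (a : ℝ → ℂ) (hg : HasGTE b u A a)
    (α₀ : ℝ) (hmin : IsLeast {α | α ∈ A ∧ α ≠ 0 ∧ a α ≠ 0} α₀)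
    (hα₀ : 0 ≤ α₀) (h0A : (0 : ℝ) ∈ A) :
    ∃ v : ℝ → ℂ, ContinuousOn v (Set.Icc 0 b) ∧
      ∀ x ∈ Set.Ioc (0 : ℝ) b, u x = (1 + ((x ^ α₀ : ℝ) : ℂ)) * v x := by
  have hpos : ∀ α ∈ A, α ≠ 0 → a α ≠ 0 → 0 < α := fun α hα hα0 haα =>
    (hα₀.trans (hmin.2 ⟨hα, hα0, haα⟩)).lt_of_ne' hα0
  refine exists_continuousOn_Icc_eq_mul hu (hg.tendsto_nhdsWithin_zero h0A hpos) ?_ ?_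
  · exact (continuous_const.add
      (Complex.continuous_ofReal.comp (Real.continuous_rpow_const hα₀))).continuousOn
  · intro x hx
    have hxα := Real.rpow_nonneg hx.1 α₀
    exact_mod_cast (by positivity : (1 + x ^ α₀ : ℝ) ≠ 0)

/-- If `u` has a generalized Taylor expansion with `0 ∈ A(u)`, `a 0 ≠ 0`, and
`α₀ = min {α ∈ A(u) \ {0} : a α ≠ 0}` satisfies `α₀ ≥ 0`, then
`u(x) = (1 + x^{α₀}) v(x)` for some `v` continuous on `[0,b]`. -/
theorem gte_factorization (b : ℝ) (hb : 0 < b) (u : ℝ → ℂ)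
    (hu : ContinuousOn u (Set.Ioc 0 b))
    (A : Set ℝ) (a : ℝ → ℂ) (hg : HasGTE b u A a)
    (α₀ : ℝ) (hmin : IsLeast {α | α ∈ A ∧ α ≠ 0 ∧ a α ≠ 0} α₀)
    (hα₀ : 0 ≤ α₀) (h0A : (0 : ℝ) ∈ A) (ha0 : a 0 ≠ 0) :
    ∃ v : ℝ → ℂ, ContinuousOn v (Set.Icc 0 b) ∧
      ∀ x ∈ Set.Ioc (0 : ℝ) b, u x = (1 + ((x ^ α₀ : ℝ) : ℂ)) * v x :=
  gte_factorization_general b u hu A a hg α₀ hmin hα₀ h0A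
end

section
/- For every E > 0, b > 0, γ > 0, α ∈ ℝ, and W smooth on [0,b] such that E - x^γ W(x) > 0 on [0,b], the function q_α(x) = (E - x^γ W(x))^α on (0,b] admits a generalized Taylor expansion at 0 with exponent set {mγ + n : m ≥ 1, n ≥ 0} ∪ {0}, with leading coefficient E^α. -/
open Set Finset

open Filter Topology

lemma aux_analytic (E α : ℝ) (hE : 0 < E) : AnalyticAt ℝ (fun t : ℝ => (E - t) ^ α) 0 := by
  have h1 : AnalyticAt ℂ (fun z : ℂ => ((E : ℂ) - z) ^ (α : ℂ)) 0 := by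
    apply AnalyticAt.cpow (f := fun z : ℂ => (E : ℂ) - z) (analyticAt_const.sub analyticAt_id)
      analyticAt_const
    simp only [sub_zero, Complex.mem_slitPlane_iff, Complex.ofReal_re, Complex.ofReal_im]
    exact Or.inl hE
  have h2 : AnalyticAt ℝ (fun t : ℝ => ((E : ℂ) - (t : ℂ)) ^ (α : ℂ)) 0 := by
    have := AnalyticAt.comp (𝕜 := ℝ) (g := fun z : ℂ => ((E : ℂ) - z) ^ (α : ℂ))
      (f := fun t : ℝ => (t : ℂ)) (x := 0)
      (by simpa using h1.restrictScalars (𝕜 := ℝ))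
      (by convert Complex.ofRealCLM.analyticAt (0 : ℝ) using 1; funext t; simp)
    exact this
  have h3 : AnalyticAt ℝ (fun t : ℝ => (((E : ℂ) - (t : ℂ)) ^ (α : ℂ)).re) 0 := by
    have := AnalyticAt.comp (𝕜 := ℝ) (g := fun z : ℂ => z.re)
      (f := fun t : ℝ => ((E : ℂ) - (t : ℂ)) ^ (α : ℂ)) (x := 0)
      (Complex.reCLM.analyticAt _) h2
    exact this
  apply h3.congr
  have hev : ∀ᶠ t in 𝓝 (0 : ℝ), |t| < E := by
    have := eventually_abs_sub_lt (0 : ℝ) hE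
    simpa using this
  filter_upwards [hev] with t ht
  have h0 : (0 : ℝ) ≤ E - t := by
    rcases abs_lt.1 ht with ⟨_, h⟩; linarith
  have hc := Complex.ofReal_cpow h0 α
  rw [show ((E : ℂ) - (t : ℂ)) = ((E - t : ℝ) : ℂ) by push_cast; ring, ← hc, Complex.ofReal_re]

lemma aux_series (f : ℝ → ℝ) (p : FormalMultilinearSeries ℝ ℝ ℝ)
    (hp : HasFPowerSeriesAt f p 0) (M : ℕ) :
    ∃ ε > (0:ℝ), ∃ c ≥ (0:ℝ), ∀ y : ℝ, |y| ≤ ε →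
      |f y - ∑ m ∈ Finset.range M, p.coeff m * y ^ m| ≤ c * |y| ^ M := by
  obtain ⟨c, hc⟩ := (hp.isBigO_sub_partialSum_pow M).bound
  rw [Metric.eventually_nhds_iff] at hc
  obtain ⟨ε, hε, hb⟩ := hc
  refine ⟨ε / 2, by linarith, max c 0, le_max_right _ _, fun y hy => ?_⟩
  have hy' : dist y 0 < ε := by
    rw [Real.dist_eq, sub_zero]
    calc |y| ≤ ε / 2 := hy
    _ < ε := by linarith
  have := hb hy'
  simp only [zero_add, Real.norm_eq_abs, abs_abs, abs_pow] at this
  have hps : p.partialSum M y = ∑ m ∈ Finset.range M, p.coeff m * y ^ m := by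
    unfold FormalMultilinearSeries.partialSum
    refine Finset.sum_congr rfl fun k _ => ?_
    rw [p.apply_eq_pow_smul_coeff, smul_eq_mul, mul_comm]
  rw [hps] at this
  calc |f y - ∑ m ∈ Finset.range M, p.coeff m * y ^ m| ≤ c * |y| ^ M := this
  _ ≤ max c 0 * |y| ^ M := by
      apply mul_le_mul_of_nonneg_right (le_max_left _ _) (by positivity)

lemma aux_taylor (b : ℝ) (hb : 0 < b) (g : ℝ → ℝ) (hg : ContDiffOn ℝ (⊤ : ℕ∞) g (Set.Icc 0 b))
    (K' : ℕ) :
    ∃ C ≥ (0:ℝ), ∀ x ∈ Set.Icc (0:ℝ) b,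
      |g x - ∑ n ∈ Finset.range (K' + 1),
          (iteratedDerivWithin n g (Set.Icc 0 b) 0 / (Nat.factorial n : ℝ)) * x ^ n| ≤ C * x ^ (K' + 1) := by
  obtain ⟨C, hC⟩ := exists_taylor_mean_remainder_bound (n := K') (le_of_lt hb)
    (hg.of_le (by exact_mod_cast le_top))
  refine ⟨|C|, abs_nonneg _, fun x hx => ?_⟩
  have h := hC x hx
  rw [taylor_within_apply] at h
  have hs : ∑ n ∈ Finset.range (K' + 1), (iteratedDerivWithin n g (Set.Icc 0 b) 0 / (Nat.factorial n : ℝ)) * x ^ n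
      = ∑ k ∈ Finset.range (K' + 1),
        ((k.factorial : ℝ)⁻¹ * (x - 0) ^ k) • iteratedDerivWithin k g (Set.Icc 0 b) 0 := by
    refine Finset.sum_congr rfl fun k _ => ?_
    rw [smul_eq_mul, sub_zero]; ring
  rw [hs]
  calc |g x - _| ≤ C * (x - 0) ^ (K' + 1) := by simpa [Real.norm_eq_abs] using h
  _ ≤ |C| * x ^ (K' + 1) := by
      rw [sub_zero]
      apply mul_le_mul_of_nonneg_right (le_abs_self _)
      exact pow_nonneg hx.1 _

/-- For `E > 0`, `γ > 0`, `α ∈ ℝ` and smooth `W` with `E - x^γ W(x) > 0` on `[0,b]`,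
the function `q_α(x) = (E - x^γ W(x))^α` admits a generalized Taylor expansion at `0`
with exponent set `{mγ + n : m ≥ 1, n ≥ 0} ∪ {0}` and leading coefficient `E^α`. -/
theorem gte_q_alpha (E b γ α : ℝ) (hE : 0 < E) (hb : 0 < b) (hγ : 0 < γ)
    (W : ℝ → ℝ) (hW : ContDiffOn ℝ (⊤ : ℕ∞) W (Set.Icc 0 b))
    (hpos : ∀ x ∈ Set.Icc (0 : ℝ) b, 0 < E - x ^ γ * W x) :
    ∃ a : ℝ → ℂ,
      HasGTE b (fun x => (((E - x ^ γ * W x) ^ α : ℝ) : ℂ))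
        ({t : ℝ | ∃ m n : ℕ, 1 ≤ m ∧ t = m * γ + n} ∪ {0}) a ∧
      a 0 = ((E ^ α : ℝ) : ℂ) := by
  classical
  obtain ⟨p, hp⟩ := aux_analytic E α hE
  set d : ℕ → ℝ := fun m => p.coeff m with hd
  have hd0 : d 0 = E ^ α := by
    have h := hp.coeff_zero (fun _ => (1:ℝ))
    simp only [sub_zero] at h
    have h2 : p.coeff 0 = p 0 (fun _ => (1:ℝ)) := by
      rfl
    rw [hd]; dsimp only; rw [h2, h]
  set s0 : Set ℝ := Set.Icc 0 b with hs0
  set w : ℕ → ℕ → ℝ :=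
    fun m n => iteratedDerivWithin n (fun x => W x ^ m) s0 0 / (Nat.factorial n : ℝ) with hw
  have hTay : ∀ m K' : ℕ, ∃ C ≥ (0:ℝ), ∀ x ∈ s0,
      |W x ^ m - ∑ n ∈ Finset.range (K' + 1), w m n * x ^ n| ≤ C * x ^ (K' + 1) :=
    fun m K' => aux_taylor b hb _ (hW.pow m) K'
  choose Cw hCw0 hCw using hTay
  set e : ℕ × ℕ → ℝ := fun q => q.1 * γ + q.2 with he
  set coef : ℕ × ℕ → ℝ := fun q => d q.1 * w q.1 q.2 with hcoef
  set Q : ℝ → Finset (ℕ × ℕ) :=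
    fun t => (Finset.Icc 1 ⌈t / γ⌉₊ ×ˢ Finset.range (⌈t⌉₊ + 1)).filter (fun q => e q = t) with hQ
  set ar : ℝ → ℝ := fun t => if t = 0 then E ^ α else ∑ q ∈ Q t, coef q with har
  have hQmem : ∀ (t : ℝ) (q : ℕ × ℕ), q ∈ Q t ↔ (1 ≤ q.1 ∧ e q = t) := by
    intro t q
    rw [hQ, Finset.mem_filter, Finset.mem_product, Finset.mem_Icc, Finset.mem_range]
    constructor
    · rintro ⟨⟨⟨h1, _⟩, _⟩, h2⟩; exact ⟨h1, h2⟩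
    · rintro ⟨h1, h2⟩
      have hq2 : (0:ℝ) ≤ (q.2 : ℝ) := Nat.cast_nonneg _
      have hq1 : (0:ℝ) ≤ (q.1 : ℝ) := Nat.cast_nonneg _
      have he1 : (q.1 : ℝ) * γ ≤ t := by
        rw [← h2, he]; dsimp only; linarith
      have he2 : (q.2 : ℝ) ≤ t := by
        rw [← h2, he]; dsimp only; nlinarith
      refine ⟨⟨⟨h1, ?_⟩, ?_⟩, h2⟩
      · have h3 : (q.1 : ℝ) ≤ t / γ := (le_div_iff₀ hγ).2 he1
        exact_mod_cast h3.trans (Nat.le_ceil _)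
      · have h4 : (q.2 : ℝ) ≤ (⌈t⌉₊ : ℝ) := he2.trans (Nat.le_ceil _)
        have : q.2 ≤ ⌈t⌉₊ := by exact_mod_cast h4
        omega
  have hAnn : ∀ t ∈ ({t : ℝ | ∃ m n : ℕ, 1 ≤ m ∧ t = m * γ + n} ∪ {0} : Set ℝ), (0:ℝ) ≤ t := by
    rintro t (⟨m, n, hm, rfl⟩ | rfl)
    · positivity
    · exact le_rfl
  refine ⟨fun t => ((ar t : ℝ) : ℂ), ⟨⟨0, fun t ht => hAnn t ht⟩, ?_⟩, by simp [har]⟩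
  intro N
  have hcast : ∀ (s : Finset ℝ) (x : ℝ),
      ‖(((E - x ^ γ * W x) ^ α : ℝ) : ℂ) -
        ∑ t ∈ s, ((ar t : ℝ) : ℂ) * ((x ^ t : ℝ) : ℂ)‖ =
      |(E - x ^ γ * W x) ^ α - ∑ t ∈ s, ar t * x ^ t| := by
    intro s x
    rw [show (∑ t ∈ s, ((ar t : ℝ) : ℂ) * ((x ^ t : ℝ) : ℂ))
        = ((∑ t ∈ s, ar t * x ^ t : ℝ) : ℂ) by push_cast; rfl,
      ← Complex.ofReal_sub, Complex.norm_real, Real.norm_eq_abs]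
  have hcontτ : ContinuousOn (fun x => x ^ γ * W x) s0 := by
    apply ContinuousOn.mul _ hW.continuousOn
    intro x _
    exact (Real.continuousAt_rpow_const x γ (Or.inr hγ.le)).continuousWithinAt
  have hcontu : ContinuousOn (fun x => (E - x ^ γ * W x) ^ α) s0 := by
    apply ContinuousOn.rpow_const (continuousOn_const.sub hcontτ)
    intro x hx; exact Or.inl (ne_of_gt (hpos x hx))
  obtain ⟨U, hU⟩ := isCompact_Icc.exists_bound_of_continuousOn hcontu
  have hU0 : 0 ≤ U := le_trans (norm_nonneg _) (hU 0 ⟨le_rfl, hb.le⟩)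
  rcases Nat.eq_zero_or_pos N with rfl | hN
  · refine ⟨∅, U, ?_, ?_⟩
    · rw [Finset.coe_empty]
      symm
      rw [Set.eq_empty_iff_forall_notMem]
      rintro t ⟨htA, htI⟩
      rw [Set.mem_Iio, Nat.cast_zero] at htI
      exact absurd (hAnn t htA) (by linarith)
    · intro x hx
      rw [hcast ∅ x, Nat.cast_zero, Real.rpow_zero, mul_one, Finset.sum_empty, sub_zero]
      have := hU x ⟨hx.1.le, hx.2⟩
      rwa [Real.norm_eq_abs] at this
  -- main case : N ≥ 1
  obtain ⟨N', rfl⟩ : ∃ N', N = N' + 1 := ⟨N - 1, (Nat.succ_pred_eq_of_pos hN).symm⟩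
  have heq : ∀ q : ℕ × ℕ, e q = (q.1 : ℝ) * γ + (q.2 : ℝ) := fun q => rfl
  have hcoefq : ∀ q : ℕ × ℕ, coef q = d q.1 * w q.1 q.2 := fun q => rfl
  have harq : ∀ t : ℝ, t ≠ 0 → ar t = ∑ q ∈ Q t, coef q := by
    intro t ht; rw [har]; dsimp only; rw [if_neg ht]
  set Nr : ℝ := ((N' + 1 : ℕ) : ℝ) with hNr
  have hNr0 : 0 < Nr := by rw [hNr]; positivity
  set M : ℕ := ⌈Nr / γ⌉₊ + 1 with hM
  have hM0 : 0 < M := Nat.succ_pos _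
  have hγM : Nr ≤ γ * M := by
    have h1 : Nr / γ ≤ (⌈Nr / γ⌉₊ : ℝ) := Nat.le_ceil _
    have h2 : (⌈Nr / γ⌉₊ : ℝ) ≤ (M : ℝ) := by rw [hM]; push_cast; linarith
    have h3 : Nr / γ ≤ (M : ℝ) := h1.trans h2
    calc Nr = γ * (Nr / γ) := by field_simp
    _ ≤ γ * M := by nlinarith
  set Full : Finset (ℕ × ℕ) := Finset.Ico 1 M ×ˢ Finset.range (N' + 1) with hFull
  set P : Finset (ℕ × ℕ) := Full.filter (fun q => e q < Nr) with hPdef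
  set R : Finset (ℕ × ℕ) := Full.filter (fun q => ¬ e q < Nr) with hRdef
  set sF : Finset ℝ := insert 0 (P.image e) with hsF
  have hePos : ∀ q : ℕ × ℕ, 1 ≤ q.1 → γ ≤ e q := by
    intro q h1; rw [heq]
    have h2 : (1 : ℝ) ≤ (q.1 : ℝ) := by exact_mod_cast h1
    have h3 : (0 : ℝ) ≤ (q.2 : ℝ) := Nat.cast_nonneg _
    nlinarith
  have hPmem : ∀ q : ℕ × ℕ, q ∈ P ↔ (1 ≤ q.1 ∧ e q < Nr) := by
    intro q
    rw [hPdef, Finset.mem_filter, hFull, Finset.mem_product, Finset.mem_Ico, Finset.mem_range]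
    constructor
    · rintro ⟨⟨⟨h1, _⟩, _⟩, h⟩; exact ⟨h1, h⟩
    · rintro ⟨h1, h⟩
      have hq2 : (0 : ℝ) ≤ (q.2 : ℝ) := Nat.cast_nonneg _
      have hq1γ : (q.1 : ℝ) * γ < Nr := by
        have := heq q ▸ h
        linarith [this]
      refine ⟨⟨⟨h1, ?_⟩, ?_⟩, h⟩
      · have h3 : (q.1 : ℝ) < Nr / γ := by rw [lt_div_iff₀ hγ]; exact hq1γ
        have h4 : (q.1 : ℝ) < (⌈Nr / γ⌉₊ : ℝ) + 1 :=
          lt_of_lt_of_le h3 (le_trans (Nat.le_ceil _) (by linarith))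
        rw [hM]; exact_mod_cast h4
      · have h5 : (q.2 : ℝ) < Nr := by
          have h6 := heq q ▸ h
          have hq1 : (0 : ℝ) ≤ (q.1 : ℝ) * γ := by positivity
          linarith [h6]
        rw [hNr] at h5
        exact_mod_cast h5
  have hsFcoe : (↑sF : Set ℝ) =
      ({t : ℝ | ∃ m n : ℕ, 1 ≤ m ∧ t = ↑m * γ + ↑n} ∪ {0}) ∩ Set.Iio ((N' + 1 : ℕ) : ℝ) := by
    ext t
    simp only [hsF, Finset.coe_insert, Set.mem_insert_iff, Finset.coe_image, Set.mem_image,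
      Finset.mem_coe, Set.mem_inter_iff, Set.mem_union, Set.mem_setOf_eq, Set.mem_singleton_iff,
      Set.mem_Iio]
    constructor
    · rintro (rfl | ⟨q, hq, rfl⟩)
      · exact ⟨Or.inr rfl, hNr0⟩
      · obtain ⟨h1, hlt⟩ := (hPmem q).1 hq
        exact ⟨Or.inl ⟨q.1, q.2, h1, (heq q).symm ▸ rfl⟩, hlt⟩
    · rintro ⟨(⟨m, n, hm, rfl⟩ | rfl), hlt⟩
      · right
        refine ⟨(m, n), (hPmem (m, n)).2 ⟨hm, ?_⟩, ?_⟩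
        · rw [heq]; exact hlt
        · rw [heq]
      · left; rfl
  have hQP : ∀ t ∈ P.image e, Q t = P.filter (fun q => e q = t) := by
    intro t ht
    obtain ⟨q0, hq0, rfl⟩ := Finset.mem_image.1 ht
    have hq0' := (hPmem q0).1 hq0
    apply Finset.ext
    intro q
    rw [hQmem, Finset.mem_filter, hPmem]
    constructor
    · rintro ⟨h1, h2⟩
      exact ⟨⟨h1, by rw [h2]; exact hq0'.2⟩, h2⟩
    · rintro ⟨⟨h1, _⟩, h2⟩; exact ⟨h1, h2⟩
  have h0notim : (0 : ℝ) ∉ P.image e := by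
    intro h
    obtain ⟨q, hq, hq0⟩ := Finset.mem_image.1 h
    have := hePos q ((hPmem q).1 hq).1
    rw [hq0] at this; linarith
  have hsum : ∀ x : ℝ, 0 < x →
      ∑ t ∈ sF, ar t * x ^ t = E ^ α + ∑ q ∈ P, coef q * x ^ (e q) := by
    intro x hx
    rw [hsF, Finset.sum_insert h0notim]
    congr 1
    · rw [Real.rpow_zero, mul_one, har]; simp
    · rw [← Finset.sum_fiberwise_of_maps_to (fun q hq => Finset.mem_image_of_mem e hq)
        (fun q => coef q * x ^ (e q))]
      refine Finset.sum_congr rfl fun t ht => ?_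
      rw [harq t (by rintro rfl; exact h0notim ht), hQP t ht, Finset.sum_mul]
      refine Finset.sum_congr rfl fun q hq => ?_
      rw [(Finset.mem_filter.1 hq).2]
  obtain ⟨ε, hε, c, hc0, hcb⟩ := aux_series _ p hp M
  obtain ⟨Wb, hWb⟩ := isCompact_Icc.exists_bound_of_continuousOn hW.continuousOn
  set W1 : ℝ := max Wb 1 with hW1
  have hW10 : 0 < W1 := lt_of_lt_of_le one_pos (le_max_right _ _)
  have hWle : ∀ x ∈ s0, |W x| ≤ W1 := fun x hx =>
    le_trans (by simpa [Real.norm_eq_abs] using hWb x hx) (le_max_left _ _)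
  set b' : ℝ := min b ((ε / W1) ^ (1 / γ)) with hb'def
  have hb'0 : 0 < b' := lt_min hb (Real.rpow_pos_of_pos (div_pos hε hW10) _)
  have hb'b : b' ≤ b := min_le_left _ _
  have hτb : ∀ x : ℝ, 0 < x → x ≤ b' → x ^ γ * W1 ≤ ε := by
    intro x hx0 hxb
    have h1 : x ^ γ ≤ b' ^ γ := Real.rpow_le_rpow hx0.le hxb hγ.le
    have h2 : b' ^ γ ≤ ε / W1 := by
      have h3 : b' ≤ (ε / W1) ^ (1 / γ) := min_le_right _ _
      calc b' ^ γ ≤ ((ε / W1) ^ (1 / γ)) ^ γ := Real.rpow_le_rpow hb'0.le h3 hγ.le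
      _ = ε / W1 := by
          rw [← Real.rpow_mul (le_of_lt (div_pos hε hW10)), one_div,
            inv_mul_cancel₀ (ne_of_gt hγ), Real.rpow_one]
    have h4 : x ^ γ ≤ ε / W1 := h1.trans h2
    calc x ^ γ * W1 ≤ (ε / W1) * W1 := mul_le_mul_of_nonneg_right h4 hW10.le
    _ = ε := div_mul_cancel₀ ε (ne_of_gt hW10)
  have hτ : ∀ x ∈ Set.Ioc (0 : ℝ) b, |x ^ γ * W x| ≤ x ^ γ * W1 := by
    intro x hx
    rw [abs_mul, abs_of_nonneg (Real.rpow_nonneg hx.1.le γ)]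
    exact mul_le_mul_of_nonneg_left (hWle x ⟨hx.1.le, hx.2⟩) (Real.rpow_nonneg hx.1.le γ)
  set C1 : ℝ := c * W1 ^ M * b ^ (γ * M - Nr) with hC1
  set C2 : ℝ := ∑ m ∈ Finset.Ico 1 M, |d m| * (b ^ γ) ^ m * Cw m N' with hC2
  set C3 : ℝ := ∑ q ∈ R, |coef q| * b ^ (e q - Nr) with hC3def
  have hC1nn : 0 ≤ C1 :=
    mul_nonneg (mul_nonneg hc0 (pow_nonneg hW10.le M)) (Real.rpow_nonneg hb.le _)
  have hC2nn : 0 ≤ C2 := Finset.sum_nonneg fun m _ =>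
    mul_nonneg (mul_nonneg (abs_nonneg _) (pow_nonneg (Real.rpow_nonneg hb.le γ) m)) (hCw0 m N')
  have hC3nn : 0 ≤ C3 := Finset.sum_nonneg fun q _ =>
    mul_nonneg (abs_nonneg _) (Real.rpow_nonneg hb.le _)
  have hmain : ∀ x ∈ Set.Ioc (0 : ℝ) b, x ≤ b' →
      |(E - x ^ γ * W x) ^ α - ∑ t ∈ sF, ar t * x ^ t| ≤ (C1 + C2 + C3) * x ^ Nr := by
    intro x hx hxb'
    have hx0 : 0 < x := hx.1
    have hxIcc : x ∈ s0 := ⟨hx0.le, hx.2⟩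
    have hxγ : 0 ≤ x ^ γ := Real.rpow_nonneg hx0.le γ
    have hxNr : 0 ≤ x ^ Nr := Real.rpow_nonneg hx0.le Nr
    set τ : ℝ := x ^ γ * W x with hτdef
    have hτε : |τ| ≤ ε := le_trans (hτ x hx) (hτb x hx0 hxb')
    have hτW1 : |τ| ≤ x ^ γ * W1 := hτ x hx
    -- B1
    have hB1 : |(E - τ) ^ α - ∑ m ∈ Finset.range M, d m * τ ^ m| ≤ C1 * x ^ Nr := by
      have h := hcb τ hτε
      calc |(E - τ) ^ α - ∑ m ∈ Finset.range M, d m * τ ^ m| ≤ c * |τ| ^ M := h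
      _ ≤ c * (x ^ γ * W1) ^ M := by
          apply mul_le_mul_of_nonneg_left _ hc0
          exact pow_le_pow_left₀ (abs_nonneg _) hτW1 M
      _ = c * W1 ^ M * (x ^ γ) ^ M := by ring
      _ = c * W1 ^ M * x ^ (γ * M) := by
          rw [← Real.rpow_natCast (x ^ γ) M, ← Real.rpow_mul hx0.le]
      _ = c * W1 ^ M * x ^ (γ * M - Nr) * x ^ Nr := by
          rw [mul_assoc (c * W1 ^ M), ← Real.rpow_add hx0, sub_add_cancel]
      _ ≤ C1 * x ^ Nr := by
          rw [hC1]
          apply mul_le_mul_of_nonneg_right _ hxNr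
          exact mul_le_mul_of_nonneg_left
            (Real.rpow_le_rpow hx0.le hx.2 (by linarith))
            (mul_nonneg hc0 (pow_nonneg hW10.le M))
    -- B2
    have hB2 : |∑ m ∈ Finset.Ico 1 M, d m *
          (τ ^ m - (x ^ γ) ^ m * (∑ n ∈ Finset.range (N' + 1), w m n * x ^ n))|
        ≤ C2 * x ^ Nr := by
      calc |∑ m ∈ Finset.Ico 1 M, d m *
          (τ ^ m - (x ^ γ) ^ m * (∑ n ∈ Finset.range (N' + 1), w m n * x ^ n))|
          ≤ ∑ m ∈ Finset.Ico 1 M, |d m *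
            (τ ^ m - (x ^ γ) ^ m * (∑ n ∈ Finset.range (N' + 1), w m n * x ^ n))| :=
          Finset.abs_sum_le_sum_abs _ _
      _ ≤ ∑ m ∈ Finset.Ico 1 M, (|d m| * (b ^ γ) ^ m * Cw m N') * x ^ Nr := by
          apply Finset.sum_le_sum
          intro m _
          have hτm : τ ^ m = (x ^ γ) ^ m * W x ^ m := by rw [hτdef, mul_pow]
          rw [abs_mul, hτm, ← mul_sub, abs_mul, abs_of_nonneg (pow_nonneg hxγ m)]
          have h2 : |W x ^ m - ∑ n ∈ Finset.range (N' + 1), w m n * x ^ n| ≤ Cw m N' * x ^ Nr := by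
            have h3 := hCw m N' x hxIcc
            rwa [show ((x : ℝ) ^ (N' + 1) : ℝ) = x ^ Nr by
              rw [hNr, ← Real.rpow_natCast x (N' + 1)]] at h3
          have h1 : (x ^ γ) ^ m ≤ (b ^ γ) ^ m :=
            pow_le_pow_left₀ hxγ (Real.rpow_le_rpow hx0.le hx.2 hγ.le) m
          calc |d m| * ((x ^ γ) ^ m * |W x ^ m - ∑ n ∈ Finset.range (N' + 1), w m n * x ^ n|)
              ≤ |d m| * ((b ^ γ) ^ m * (Cw m N' * x ^ Nr)) := by
                apply mul_le_mul_of_nonneg_left _ (abs_nonneg _)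
                apply mul_le_mul h1 h2 (abs_nonneg _) (pow_nonneg (Real.rpow_nonneg hb.le γ) m)
          _ = (|d m| * (b ^ γ) ^ m * Cw m N') * x ^ Nr := by ring
      _ = C2 * x ^ Nr := by rw [hC2, Finset.sum_mul]
    -- B3
    have hB3 : |∑ q ∈ R, coef q * x ^ (e q)| ≤ C3 * x ^ Nr := by
      calc |∑ q ∈ R, coef q * x ^ (e q)| ≤ ∑ q ∈ R, |coef q * x ^ (e q)| :=
          Finset.abs_sum_le_sum_abs _ _
      _ ≤ ∑ q ∈ R, (|coef q| * b ^ (e q - Nr)) * x ^ Nr := by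
          apply Finset.sum_le_sum
          intro q hq
          rw [hRdef] at hq
          have hqN : Nr ≤ e q := not_lt.1 (Finset.mem_filter.1 hq).2
          rw [abs_mul, abs_of_nonneg (Real.rpow_nonneg hx0.le _)]
          have hxe : x ^ (e q) = x ^ (e q - Nr) * x ^ Nr := by
            rw [← Real.rpow_add hx0, sub_add_cancel]
          rw [hxe, ← mul_assoc]
          apply mul_le_mul_of_nonneg_right _ hxNr
          apply mul_le_mul_of_nonneg_left _ (abs_nonneg _)
          exact Real.rpow_le_rpow hx0.le hx.2 (by linarith)
      _ = C3 * x ^ Nr := by rw [hC3def, Finset.sum_mul]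
    -- identities
    have hI1 : ∑ m ∈ Finset.range M, d m * τ ^ m
        = E ^ α + ∑ m ∈ Finset.Ico 1 M, d m * τ ^ m := by
      rw [Finset.range_eq_Ico, Finset.sum_eq_sum_Ico_succ_bot hM0]
      simp [hd0]
    have hI2 : ∑ m ∈ Finset.Ico 1 M, d m *
          ((x ^ γ) ^ m * (∑ n ∈ Finset.range (N' + 1), w m n * x ^ n))
        = (∑ q ∈ P, coef q * x ^ (e q)) + (∑ q ∈ R, coef q * x ^ (e q)) := by
      rw [hPdef, hRdef, Finset.sum_filter_add_sum_filter_not, hFull, Finset.sum_product]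
      refine Finset.sum_congr rfl fun m _ => ?_
      rw [Finset.mul_sum, Finset.mul_sum]
      refine Finset.sum_congr rfl fun n _ => ?_
      have hx_e : x ^ (e (m, n)) = (x ^ γ) ^ m * x ^ n := by
        rw [heq]
        dsimp only
        rw [Real.rpow_add hx0, mul_comm ((m : ℝ)) γ, Real.rpow_mul hx0.le,
          Real.rpow_natCast, Real.rpow_natCast]
      rw [hx_e, hcoefq]
      ring
    have hdecomp : (E - τ) ^ α - ∑ t ∈ sF, ar t * x ^ t
        = ((E - τ) ^ α - ∑ m ∈ Finset.range M, d m * τ ^ m)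
          + (∑ m ∈ Finset.Ico 1 M, d m *
              (τ ^ m - (x ^ γ) ^ m * (∑ n ∈ Finset.range (N' + 1), w m n * x ^ n)))
          + (∑ q ∈ R, coef q * x ^ (e q)) := by
      have hsplit : ∑ m ∈ Finset.Ico 1 M, d m *
            (τ ^ m - (x ^ γ) ^ m * (∑ n ∈ Finset.range (N' + 1), w m n * x ^ n))
          = (∑ m ∈ Finset.Ico 1 M, d m * τ ^ m)
            - ∑ m ∈ Finset.Ico 1 M, d m *
              ((x ^ γ) ^ m * (∑ n ∈ Finset.range (N' + 1), w m n * x ^ n)) := by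
        rw [← Finset.sum_sub_distrib]
        refine Finset.sum_congr rfl fun m _ => by ring
      rw [hsum x hx0, hsplit, hI1, hI2]
      ring
    calc |(E - τ) ^ α - ∑ t ∈ sF, ar t * x ^ t|
        ≤ |(E - τ) ^ α - ∑ m ∈ Finset.range M, d m * τ ^ m|
          + |∑ m ∈ Finset.Ico 1 M, d m *
              (τ ^ m - (x ^ γ) ^ m * (∑ n ∈ Finset.range (N' + 1), w m n * x ^ n))|
          + |∑ q ∈ R, coef q * x ^ (e q)| := by
          rw [hdecomp]; exact abs_add_three _ _ _
    _ ≤ C1 * x ^ Nr + C2 * x ^ Nr + C3 * x ^ Nr := by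
        exact add_le_add (add_le_add hB1 hB2) hB3
    _ = (C1 + C2 + C3) * x ^ Nr := by ring
  set G : ℝ := U + ∑ t ∈ sF, |ar t| * b ^ t with hG
  have hsFnn : ∀ t ∈ sF, (0 : ℝ) ≤ t := by
    intro t ht
    rw [hsF] at ht
    rcases Finset.mem_insert.1 ht with rfl | h
    · exact le_rfl
    · obtain ⟨q, hq, rfl⟩ := Finset.mem_image.1 h
      exact le_trans hγ.le (hePos q ((hPmem q).1 hq).1)
  have hG0 : 0 ≤ G := by
    apply add_nonneg hU0
    exact Finset.sum_nonneg fun t _ => mul_nonneg (abs_nonneg _) (Real.rpow_nonneg hb.le _)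
  have hb'Nr : 0 < b' ^ Nr := Real.rpow_pos_of_pos hb'0 Nr
  have hglobal : ∀ x ∈ Set.Ioc (0 : ℝ) b, b' < x →
      |(E - x ^ γ * W x) ^ α - ∑ t ∈ sF, ar t * x ^ t| ≤ (G / b' ^ Nr) * x ^ Nr := by
    intro x hx hbx
    have h1 : |(E - x ^ γ * W x) ^ α - ∑ t ∈ sF, ar t * x ^ t| ≤ G := by
      rw [sub_eq_add_neg]
      refine (abs_add_le _ _).trans ?_
      rw [abs_neg, hG]
      apply add_le_add
      · simpa [Real.norm_eq_abs] using hU x ⟨hx.1.le, hx.2⟩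
      · refine (Finset.abs_sum_le_sum_abs _ _).trans ?_
        apply Finset.sum_le_sum
        intro t ht
        rw [abs_mul, abs_of_nonneg (Real.rpow_nonneg hx.1.le _)]
        exact mul_le_mul_of_nonneg_left
          (Real.rpow_le_rpow hx.1.le hx.2 (hsFnn t ht)) (abs_nonneg _)
    have h2 : b' ^ Nr ≤ x ^ Nr := Real.rpow_le_rpow hb'0.le hbx.le hNr0.le
    calc |(E - x ^ γ * W x) ^ α - ∑ t ∈ sF, ar t * x ^ t| ≤ G := h1
    _ = (G / b' ^ Nr) * b' ^ Nr := by field_simp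
    _ ≤ (G / b' ^ Nr) * x ^ Nr :=
        mul_le_mul_of_nonneg_left h2 (div_nonneg hG0 hb'Nr.le)
  refine ⟨sF, (C1 + C2 + C3) + G / b' ^ Nr, hsFcoe, ?_⟩
  intro x hx
  rw [hcast sF x]
  have hxNr : 0 ≤ x ^ Nr := Real.rpow_nonneg hx.1.le Nr
  have hGb : 0 ≤ G / b' ^ Nr := div_nonneg hG0 hb'Nr.le
  show |(E - x ^ γ * W x) ^ α - ∑ t ∈ sF, ar t * x ^ t| ≤ _ * x ^ Nr
  rcases le_or_gt x b' with h | h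
  · calc |(E - x ^ γ * W x) ^ α - ∑ t ∈ sF, ar t * x ^ t|
        ≤ (C1 + C2 + C3) * x ^ Nr := hmain x hx h
    _ ≤ ((C1 + C2 + C3) + G / b' ^ Nr) * x ^ Nr := by
        apply mul_le_mul_of_nonneg_right _ hxNr
        linarith
  · calc |(E - x ^ γ * W x) ^ α - ∑ t ∈ sF, ar t * x ^ t|
        ≤ (G / b' ^ Nr) * x ^ Nr := hglobal x hx h
    _ ≤ ((C1 + C2 + C3) + G / b' ^ Nr) * x ^ Nr := by
        apply mul_le_mul_of_nonneg_right _ hxNr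
        linarith
end

section
/- Let W₀ be smooth in a neighborhood of 0, γ ∈ ℝ, and suppose E - x₊^γ W₀(x) > 0 on [0,b]. Define q_α(x) = (E - x₊^γ W₀(x))^α. Then for every ℓ ≥ 1 there exist smooth functions W_{α,ℓ,j,m,n} on [0,b] (1 ≤ j,m ≤ ℓ, 0 ≤ n ≤ ℓ) such that for all x ∈ (0,b]: q_α^{(ℓ)}(x) = Σ_{j=1}^{ℓ} (E - x₊^γ W₀(x))^{α-j} Σ_{m=1}^{ℓ} Σ_{n=0}^{ℓ} x^{mγ - n} W_{α,ℓ,j,m,n}(x). -/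
open Set Finset

private lemma sum_trunc_aux (N : ℕ) (g : ℕ → ℝ) :
    ∑ j ∈ Finset.Icc 1 (N + 1), (if j ≤ N then g j else 0) = ∑ j ∈ Finset.Icc 1 N, g j := by
  rw [← Finset.sum_subset (Finset.Icc_subset_Icc_right (Nat.le_succ N))
    (fun j hj hnj => if_neg (fun hle => hnj (Finset.mem_Icc.mpr ⟨(Finset.mem_Icc.mp hj).1, hle⟩)))]
  exact Finset.sum_congr rfl fun j hj => if_pos (Finset.mem_Icc.mp hj).2

private lemma sum_shift_aux (N : ℕ) (g : ℕ → ℝ) :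
    ∑ j ∈ Finset.Icc 1 (N + 1), (if 2 ≤ j then g j else 0) = ∑ j ∈ Finset.Icc 1 N, g (j + 1) := by
  rw [← Finset.sum_subset (Finset.Icc_subset_Icc_left one_le_two)
    (fun j hj hnj => if_neg (fun hle => hnj (Finset.mem_Icc.mpr ⟨hle, (Finset.mem_Icc.mp hj).2⟩)))]
  rw [show Finset.Icc 2 (N + 1) = (Finset.Icc 1 N).map (addRightEmbedding 1) from by
    rw [Finset.map_add_right_Icc]]
  rw [Finset.sum_map]
  refine Finset.sum_congr rfl fun j hj => ?_
  have h1 : 1 ≤ j := (Finset.mem_Icc.mp hj).1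
  simp only [addRightEmbedding_apply]
  exact if_pos (by omega)

/-- Structure of the derivatives of `q_α(x) = (E - x₊^γ W₀(x))^α`: for every `ℓ ≥ 1`
there are smooth functions `W j m n` on `[0,b]` (`1 ≤ j,m ≤ ℓ`, `0 ≤ n ≤ ℓ`) with
`q_α^{(ℓ)}(x) = ∑_{j=1}^ℓ (E - x^γ W₀(x))^{α-j} ∑_{m=1}^ℓ ∑_{n=0}^ℓ x^{mγ-n} W j m n`. -/
theorem deriv_q_alpha_structure (E b γ α : ℝ) (hb : 0 < b)
    (W₀ : ℝ → ℝ) (hW₀ : ContDiff ℝ (⊤ : ℕ∞) W₀)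
    (hpos : ∀ x ∈ Set.Icc (0 : ℝ) b, 0 < E - x ^ γ * W₀ x)
    (q : ℝ → ℝ)
    (hq : ∀ x : ℝ, q x = (E - (if 0 < x then x ^ γ else 0) * W₀ x) ^ α) :
    ∀ ℓ : ℕ, 1 ≤ ℓ → ∃ W : ℕ → ℕ → ℕ → ℝ → ℝ,
      (∀ j m n, ContDiffOn ℝ (⊤ : ℕ∞) (W j m n) (Set.Icc 0 b)) ∧
      ∀ x ∈ Set.Ioc (0 : ℝ) b,
        iteratedDeriv ℓ q x =
          ∑ j ∈ Finset.Icc 1 ℓ, (E - x ^ γ * W₀ x) ^ (α - j) *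
            ∑ m ∈ Finset.Icc 1 ℓ, ∑ n ∈ Finset.range (ℓ + 1),
              x ^ ((m : ℝ) * γ - n) * W j m n x := by
  intro ℓ hℓ
  have derivSmooth : ∀ g : ℝ → ℝ, ContDiff ℝ (⊤ : ℕ∞) g → ContDiff ℝ (⊤ : ℕ∞) (deriv g) := by
    intro g hg
    have h := (contDiff_succ_iff_deriv (n := ((⊤ : ℕ∞) : WithTop ℕ∞))).mp (show ContDiff ℝ (((⊤ : ℕ∞) : WithTop ℕ∞) + 1) g by rw [← WithTop.coe_one, ← WithTop.coe_add, top_add]; exact hg)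
    exact h.2.2
  have hW₀d : ContDiff ℝ (⊤ : ℕ∞) (deriv W₀) := derivSmooth W₀ hW₀
  set U : Set ℝ := Set.Ioi 0 ∩ (fun x => E - x ^ γ * W₀ x) ⁻¹' Set.Ioi 0 with hUdef
  have hUopen : IsOpen U := by
    refine ContinuousOn.isOpen_inter_preimage ?_ isOpen_Ioi isOpen_Ioi
    intro x hx
    exact (continuousAt_const.sub ((Real.continuousAt_rpow_const x γ
      (Or.inl (ne_of_gt hx))).mul hW₀.continuous.continuousAt)).continuousWithinAt
  have hmemU : ∀ x : ℝ, x ∈ U ↔ (0 < x ∧ 0 < E - x ^ γ * W₀ x) := by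
    intro x
    simp [hUdef, Set.mem_Ioi, sub_pos]
  have hsub : Set.Ioc (0 : ℝ) b ⊆ U := by
    intro x hx
    exact (hmemU x).mpr ⟨hx.1, hpos x ⟨hx.1.le, hx.2⟩⟩
  have hqU : ∀ x ∈ U, q x = (E - x ^ γ * W₀ x) ^ α := by
    intro x hx
    rw [hq x, if_pos ((hmemU x).mp hx).1]
  -- derivative of the base function
  have hfd : ∀ x : ℝ, 0 < x → HasDerivAt (fun y => E - y ^ γ * W₀ y)
      (-(γ * x ^ (γ - 1) * W₀ x + x ^ γ * deriv W₀ x)) x := by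
    intro x hx
    exact ((Real.hasDerivAt_rpow_const (Or.inl hx.ne')).mul
      ((hW₀.differentiable (by simp) x).hasDerivAt)).const_sub E
  -- main induction
  have key : ∀ L : ℕ, ∃ V : ℕ → ℕ → ℝ → ℝ,
      (∀ j m, ContDiff ℝ (⊤ : ℕ∞) (V j m)) ∧
      ∀ x ∈ U, iteratedDeriv (L + 1) q x =
        ∑ j ∈ Finset.Icc 1 (L + 1), ∑ m ∈ Finset.Icc 1 (L + 1),
          (E - x ^ γ * W₀ x) ^ (α - j) * x ^ ((m : ℝ) * γ - (L + 1 : ℕ)) * V j m x := by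
    intro L
    induction L with
    | zero =>
      refine ⟨fun _ _ x => -α * (γ * W₀ x + x * deriv W₀ x), fun j m => ?_, ?_⟩
      · exact contDiff_const.mul ((contDiff_const.mul hW₀).add (contDiff_id.mul hW₀d))
      · intro x hx
        obtain ⟨hx0, hxf⟩ := (hmemU x).mp hx
        have hder : HasDerivAt q
            ((-(γ * x ^ (γ - 1) * W₀ x + x ^ γ * deriv W₀ x)) * α *
              (E - x ^ γ * W₀ x) ^ (α - 1)) x := by
          refine HasDerivAt.congr_of_eventuallyEq
            (((hfd x hx0).rpow_const (Or.inl hxf.ne'))) ?_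
          filter_upwards [hUopen.mem_nhds hx] with y hy using hqU y hy
        rw [iteratedDeriv_one, hder.deriv]
        have hxg : x ^ γ = x ^ (γ - 1) * x := by
          rw [← Real.rpow_add_one hx0.ne' (γ - 1), sub_add_cancel]
        simp only [Finset.Icc_self, Finset.sum_singleton]
        rw [show ((1 : ℕ) : ℝ) * γ - ((0 + 1 : ℕ) : ℝ) = γ - 1 by push_cast; ring,
          show α - ((1 : ℕ) : ℝ) = α - 1 by push_cast; ring, hxg]
        ring
    | succ L ih =>
      obtain ⟨V, hVs, hVeq⟩ := ih
      set N := L + 1 with hN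
      have hVd : ∀ j m, ContDiff ℝ (⊤ : ℕ∞) (deriv (V j m)) :=
        fun j m => derivSmooth _ (hVs j m)
      set Va : ℕ → ℕ → ℝ → ℝ := fun j m y =>
        ((m : ℝ) * γ - (N : ℝ)) * V j m y + y * deriv (V j m) y with hVa
      set Vb : ℕ → ℕ → ℝ → ℝ := fun j m y =>
        -(α - (j : ℝ)) * (γ * W₀ y + y * deriv W₀ y) * V j m y with hVb
      refine ⟨fun j m => fun y =>
        (if j ≤ N then if m ≤ N then Va j m y else 0 else 0) +
        (if 2 ≤ j then if 2 ≤ m then Vb (j - 1) (m - 1) y else 0 else 0), fun j m => ?_, ?_⟩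
      · apply ContDiff.add
        · split_ifs with h1 h2
          · simp only [hVa]
            exact (contDiff_const.mul (hVs j m)).add (contDiff_id.mul (hVd j m))
          · exact contDiff_const
          · exact contDiff_const
        · split_ifs with h1 h2
          · simp only [hVb]
            exact (contDiff_const.mul ((contDiff_const.mul hW₀).add
              (contDiff_id.mul hW₀d))).mul (hVs (j - 1) (m - 1))
          · exact contDiff_const
          · exact contDiff_const
      · intro x hx
        obtain ⟨hx0, hxf⟩ := (hmemU x).mp hx
        have hstep : iteratedDeriv (N + 1) q x = ∑ j ∈ Finset.Icc 1 N, ∑ m ∈ Finset.Icc 1 N,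
            ((E - x ^ γ * W₀ x) ^ (α - (j : ℝ)) * x ^ ((m : ℝ) * γ - ((N : ℝ) + 1)) * Va j m x +
             (E - x ^ γ * W₀ x) ^ (α - ((j : ℝ) + 1)) *
                x ^ (((m : ℝ) + 1) * γ - ((N : ℝ) + 1)) * Vb j m x) := by
          rw [iteratedDeriv_succ]
          have hev : iteratedDeriv N q =ᶠ[nhds x] fun y =>
              ∑ j ∈ Finset.Icc 1 N, ∑ m ∈ Finset.Icc 1 N,
                (E - y ^ γ * W₀ y) ^ (α - j) * y ^ ((m : ℝ) * γ - (N : ℕ)) * V j m y := by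
            filter_upwards [hUopen.mem_nhds hx] with y hy using hVeq y hy
          rw [hev.deriv_eq]
          have hd : HasDerivAt (fun y => ∑ j ∈ Finset.Icc 1 N, ∑ m ∈ Finset.Icc 1 N,
              (E - y ^ γ * W₀ y) ^ (α - j) * y ^ ((m : ℝ) * γ - (N : ℕ)) * V j m y)
              (∑ j ∈ Finset.Icc 1 N, ∑ m ∈ Finset.Icc 1 N,
                ((E - x ^ γ * W₀ x) ^ (α - (j : ℝ)) * x ^ ((m : ℝ) * γ - ((N : ℝ) + 1)) * Va j m x +
                 (E - x ^ γ * W₀ x) ^ (α - ((j : ℝ) + 1)) *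
                    x ^ (((m : ℝ) + 1) * γ - ((N : ℝ) + 1)) * Vb j m x)) x := by
            refine HasDerivAt.fun_sum fun j _ => HasDerivAt.fun_sum fun m _ => ?_
            have h1 : HasDerivAt (fun y => (E - y ^ γ * W₀ y) ^ (α - (j : ℝ)))
                ((-(γ * x ^ (γ - 1) * W₀ x + x ^ γ * deriv W₀ x)) * (α - (j : ℝ)) *
                  (E - x ^ γ * W₀ x) ^ (α - (j : ℝ) - 1)) x :=
              (hfd x hx0).rpow_const (Or.inl hxf.ne')
            have h2 : HasDerivAt (fun y : ℝ => y ^ ((m : ℝ) * γ - (N : ℕ)))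
                (((m : ℝ) * γ - (N : ℕ)) * x ^ ((m : ℝ) * γ - (N : ℕ) - 1)) x :=
              Real.hasDerivAt_rpow_const (Or.inl hx0.ne')
            have h3 : HasDerivAt (V j m) (deriv (V j m) x) x :=
              ((hVs j m).differentiable (by simp) x).hasDerivAt
            have h := (h1.fun_mul h2).fun_mul h3
            convert h using 1
            rfl
            have e1 : x ^ ((m : ℝ) * γ - (N : ℕ)) = x ^ ((m : ℝ) * γ - ((N : ℝ) + 1)) * x := by
              rw [show (m : ℝ) * γ - (N : ℕ) = ((m : ℝ) * γ - ((N : ℝ) + 1)) + 1 by push_cast; ring,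
                Real.rpow_add_one hx0.ne']
            have e2 : x ^ (γ - 1) * x = x ^ γ := by
              rw [← Real.rpow_add_one hx0.ne' (γ - 1), sub_add_cancel]
            have e3 : x ^ (((m : ℝ) + 1) * γ - ((N : ℝ) + 1)) =
                x ^ ((m : ℝ) * γ - ((N : ℝ) + 1)) * x ^ (γ - 1) * x := by
              rw [show ((m : ℝ) + 1) * γ - ((N : ℝ) + 1) =
                  ((m : ℝ) * γ - ((N : ℝ) + 1)) + (γ - 1) + 1 by ring,
                Real.rpow_add_one hx0.ne', Real.rpow_add hx0]
            have e4 : (E - x ^ γ * W₀ x) ^ (α - ((j : ℝ) + 1)) =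
                (E - x ^ γ * W₀ x) ^ (α - (j : ℝ) - 1) := by
              rw [show α - ((j : ℝ) + 1) = α - (j : ℝ) - 1 by ring]
            have e5 : x ^ ((m : ℝ) * γ - (N : ℕ) - 1) = x ^ ((m : ℝ) * γ - ((N : ℝ) + 1)) := by
              rw [show (m : ℝ) * γ - (N : ℕ) - 1 = (m : ℝ) * γ - ((N : ℝ) + 1) by push_cast; ring]
            simp only [hVa, hVb]
            rw [e4, e3, e5, e1, ← e2]
            ring
          rw [hd.deriv]
        rw [hstep]
        simp only [mul_add, mul_ite, mul_zero, Finset.sum_add_distrib]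
        congr 1
        · -- Va part
          have h1 : ∀ j ∈ Finset.Icc 1 (N + 1),
              (∑ m ∈ Finset.Icc 1 (N + 1), if j ≤ N then (if m ≤ N then
                (E - x ^ γ * W₀ x) ^ (α - (j : ℝ)) *
                  x ^ ((m : ℝ) * γ - ((N + 1 : ℕ) : ℝ)) * Va j m x else 0) else 0)
              = (if j ≤ N then ∑ m ∈ Finset.Icc 1 (N + 1), (if m ≤ N then
                (E - x ^ γ * W₀ x) ^ (α - (j : ℝ)) *
                  x ^ ((m : ℝ) * γ - ((N + 1 : ℕ) : ℝ)) * Va j m x else 0) else 0) := by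
            intro j _
            split_ifs with h
            · rfl
            · simp
          rw [Finset.sum_congr rfl h1, sum_trunc_aux]
          refine Finset.sum_congr rfl fun j hj => ?_
          rw [sum_trunc_aux]
          refine Finset.sum_congr rfl fun m hm => ?_
          rw [show ((N + 1 : ℕ) : ℝ) = (N : ℝ) + 1 by push_cast; ring]
        · -- Vb part
          have h1 : ∀ j ∈ Finset.Icc 1 (N + 1),
              (∑ m ∈ Finset.Icc 1 (N + 1), if 2 ≤ j then (if 2 ≤ m then
                (E - x ^ γ * W₀ x) ^ (α - (j : ℝ)) *
                  x ^ ((m : ℝ) * γ - ((N + 1 : ℕ) : ℝ)) * Vb (j - 1) (m - 1) x else 0) else 0)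
              = (if 2 ≤ j then ∑ m ∈ Finset.Icc 1 (N + 1), (if 2 ≤ m then
                (E - x ^ γ * W₀ x) ^ (α - (j : ℝ)) *
                  x ^ ((m : ℝ) * γ - ((N + 1 : ℕ) : ℝ)) * Vb (j - 1) (m - 1) x else 0) else 0) := by
            intro j _
            split_ifs with h
            · rfl
            · simp
          rw [Finset.sum_congr rfl h1, sum_shift_aux]
          refine Finset.sum_congr rfl fun j hj => ?_
          rw [sum_shift_aux]
          refine Finset.sum_congr rfl fun m hm => ?_
          simp only [Nat.add_sub_cancel, Nat.cast_add, Nat.cast_one]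
  -- conclude
  obtain ⟨V, hVs, hVeq⟩ := key (ℓ - 1)
  have hℓ' : ℓ - 1 + 1 = ℓ := Nat.succ_pred_eq_of_pos hℓ
  rw [hℓ'] at hVeq
  refine ⟨fun j m n => if n = ℓ then V j m else fun _ => 0, fun j m n => ?_, ?_⟩
  · show ContDiffOn ℝ (⊤ : ℕ∞) (if n = ℓ then V j m else fun _ => 0) (Set.Icc 0 b)
    split_ifs with h
    · exact (hVs j m).contDiffOn
    · exact contDiffOn_const
  · intro x hx
    beta_reduce
    rw [hVeq x (hsub hx)]
    refine Finset.sum_congr rfl fun j hj => ?_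
    rw [Finset.mul_sum]
    refine Finset.sum_congr rfl fun m hm => ?_
    have hsum : ∑ n ∈ Finset.range (ℓ + 1),
        x ^ ((m : ℝ) * γ - n) * (if n = ℓ then V j m else fun _ => 0) x =
        x ^ ((m : ℝ) * γ - ℓ) * V j m x := by
      rw [Finset.sum_eq_single ℓ]
      · rw [if_pos rfl]
      · intro n hn hne
        simp [if_neg hne]
      · intro h
        exact absurd (Finset.self_mem_range_succ ℓ) h
    rw [hsum, ← mul_assoc]
end

section
/- Let V(x) = x^γ W(x) with γ > 0 not an integer, W smooth and positive on [0,b], and E - V(x) ≥ δ > 0 on [0,b]. Let (A_k) be the WKB amplitudes defined by A₀ = (E-V)^{-1/4} and A_{k+1}(x) = (i/2) A₀(x) ∫_x^b A_k''(y) A₀(y)^{-1} dy. Then for each k ≥ 0 there exists a constant C_k and a natural number N_k, σ_k such that for all x ∈ (0,b], |A_k(x)| ≤ C_k (1 + x^{γ-k})(1 + p_{N_k}(W))^{σ_k}, where p_N(W) = max_{0≤j≤N} sup_{[0,b]}|W^{(j)}|. -/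
open Set MeasureTheory intervalIntegral

open Set MeasureTheory intervalIntegral Filter
open scoped ContDiff

namespace WKBAux
variable {𝔸 : Type*} [NormedCommRing 𝔸] [NormedAlgebra ℝ 𝔸]

lemma itd_const_mul {𝕜 : Type*} [NontriviallyNormedField 𝕜] [NormedAlgebra ℝ 𝕜]
    (n : ℕ) (c : 𝕜) (f : ℝ → 𝕜) :
    iteratedDeriv n (fun x => c * f x) = fun x => c * iteratedDeriv n f x := by
  induction n with
  | zero => simp [iteratedDeriv_zero]
  | succ n ih =>
    funext x
    rw [iteratedDeriv_succ, ih, iteratedDeriv_succ]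
    exact deriv_const_mul_field c

lemma deriv_ofReal_comp (f : ℝ → ℝ) (x : ℝ) :
    deriv (fun t => ((f t : ℝ) : ℂ)) x = ((deriv f x : ℝ) : ℂ) := by
  by_cases h : DifferentiableAt ℝ f x
  · exact (h.hasDerivAt.ofReal_comp).deriv
  · have h2 : ¬ DifferentiableAt ℝ (fun t => ((f t : ℝ) : ℂ)) x := by
      intro hc
      have := (Complex.reCLM.differentiableAt).comp x hc
      exact h (by simpa [Function.comp_def, Complex.ofReal_re] using this)
    rw [deriv_zero_of_not_differentiableAt h, deriv_zero_of_not_differentiableAt h2,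
      Complex.ofReal_zero]

lemma itd_ofReal (n : ℕ) (f : ℝ → ℝ) :
    iteratedDeriv n (fun t => ((f t : ℝ) : ℂ)) = fun x => ((iteratedDeriv n f x : ℝ) : ℂ) := by
  induction n with
  | zero => simp [iteratedDeriv_zero]
  | succ n ih =>
    funext x
    rw [iteratedDeriv_succ, ih, iteratedDeriv_succ]
    exact deriv_ofReal_comp _ x

lemma itd_itd (m n : ℕ) (f : ℝ → 𝔸) :
    iteratedDeriv m (iteratedDeriv n f) = iteratedDeriv (m + n) f := by
  induction m with
  | zero => simp [iteratedDeriv_zero]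
  | succ m ih =>
    have hmn : m + 1 + n = (m + n) + 1 := by omega
    rw [hmn, iteratedDeriv_succ, iteratedDeriv_succ, ih]

/-- smoothness of iterated derivatives on an open set -/

lemma contDiffOn_itd {F : Type*} [NormedAddCommGroup F] [NormedSpace ℝ F]
    {I : Set ℝ} (hI : IsOpen I) {f : ℝ → F} (hf : ContDiffOn ℝ ∞ f I) (n : ℕ) :
    ContDiffOn ℝ ∞ (iteratedDeriv n f) I := by
  induction n with
  | zero => simpa [iteratedDeriv_zero] using hf
  | succ n ih =>
    rw [iteratedDeriv_succ]
    exact ((contDiffOn_infty_iff_deriv_of_isOpen hI).1 ih).2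

lemma rpow_le_tpl {b a d x : ℝ} (hb : 0 < b) (h : a < 0 → d ≤ a) (hx : x ∈ Set.Ioc (0:ℝ) b) :
    x ^ a ≤ (b ^ a + b ^ (a - d)) * (1 + x ^ d) := by
  obtain ⟨hx0, hxb⟩ := hx
  have hxd : (0:ℝ) < x ^ d := Real.rpow_pos_of_pos hx0 d
  rcases le_or_gt 0 a with ha | ha
  · have h1 : x ^ a ≤ b ^ a := Real.rpow_le_rpow hx0.le hxb ha
    have h2 : (0:ℝ) < b ^ (a - d) := Real.rpow_pos_of_pos hb _
    have h3 : (0:ℝ) < b ^ a := Real.rpow_pos_of_pos hb _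
    nlinarith
  · have hda := h ha
    have he : x ^ a = x ^ d * x ^ (a - d) := by
      rw [← Real.rpow_add hx0]; ring_nf
    have h2 : x ^ (a - d) ≤ b ^ (a - d) := Real.rpow_le_rpow hx0.le hxb (by linarith)
    have h3 : (0:ℝ) < b ^ a := Real.rpow_pos_of_pos hb _
    have h4 : (0:ℝ) < b ^ (a - d) := Real.rpow_pos_of_pos hb _
    nlinarith

/-- the template constant for products -/

noncomputable def tplK (b a c d : ℝ) : ℝ :=
  1 + (b ^ a + b ^ (a - d)) + (b ^ c + b ^ (c - d)) + (b ^ (a + c) + b ^ (a + c - d))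

lemma tplK_pos {b : ℝ} (hb : 0 < b) (a c d : ℝ) : 0 < tplK b a c d := by
  unfold tplK
  have := Real.rpow_pos_of_pos hb a
  have := Real.rpow_pos_of_pos hb (a - d)
  have := Real.rpow_pos_of_pos hb c
  have := Real.rpow_pos_of_pos hb (c - d)
  have := Real.rpow_pos_of_pos hb (a + c)
  have := Real.rpow_pos_of_pos hb (a + c - d)
  linarith

lemma tpl_mul {b a c d x : ℝ} (hb : 0 < b) (hda : d ≤ a) (hdc : d ≤ c)
    (hs : min d 0 ≤ a + c) (hx : x ∈ Set.Ioc (0:ℝ) b) :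
    (1 + x ^ a) * (1 + x ^ c) ≤ tplK b a c d * (1 + x ^ d) := by
  have hx0 := hx.1
  have hxd : (0:ℝ) < x ^ d := Real.rpow_pos_of_pos hx0 d
  have hac : x ^ a * x ^ c = x ^ (a + c) := (Real.rpow_add hx0 a c).symm
  have h1 : x ^ a ≤ (b ^ a + b ^ (a - d)) * (1 + x ^ d) := rpow_le_tpl hb (fun _ => hda) hx
  have h2 : x ^ c ≤ (b ^ c + b ^ (c - d)) * (1 + x ^ d) := rpow_le_tpl hb (fun _ => hdc) hx
  have h3 : x ^ (a + c) ≤ (b ^ (a + c) + b ^ (a + c - d)) * (1 + x ^ d) := by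
    refine rpow_le_tpl hb (fun hneg => ?_) hx
    rcases le_or_gt d 0 with h0 | h0
    · rw [min_eq_left h0] at hs; exact hs
    · rw [min_eq_right h0.le] at hs; linarith
  have h4 : (1:ℝ) ≤ 1 * (1 + x ^ d) := by nlinarith
  have expand : (1 + x ^ a) * (1 + x ^ c) = 1 + x ^ a + x ^ c + x ^ (a + c) := by
    rw [← hac]; ring
  rw [expand]
  unfold tplK
  nlinarith

/-- pointwise bound statement of symbol type at one order -/

def BndAt (b μ : ℝ) (f : ℝ → 𝔸) (j : ℕ) : Prop :=
  ∃ C : ℝ, 0 < C ∧ ∀ x ∈ Set.Ioc (0:ℝ) b, ‖iteratedDeriv j f x‖ ≤ C * (1 + x ^ (μ - (j:ℝ)))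

def Bnd (b μ : ℝ) (f : ℝ → 𝔸) : Prop := ∀ j : ℕ, BndAt b μ f j

lemma tpl_pos {x : ℝ} (hx : 0 < x) (e : ℝ) : (0:ℝ) < 1 + x ^ e := by
  have := Real.rpow_pos_of_pos hx e; linarith

/-- Leibniz norm bound for iterated (global) derivatives on an open set. -/

lemma norm_itd_mul_le {I : Set ℝ} (hI : IsOpen I) {f g : ℝ → 𝔸}
    (hf : ContDiffOn ℝ ∞ f I) (hg : ContDiffOn ℝ ∞ g I) {x : ℝ} (hx : x ∈ I) (n : ℕ) :
    ‖iteratedDeriv n (fun y => f y * g y) x‖ ≤ ∑ i ∈ Finset.range (n + 1),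
      (n.choose i : ℝ) * ‖iteratedDeriv i f x‖ * ‖iteratedDeriv (n - i) g x‖ := by
  have h2 : ∀ (m : ℕ) (h : ℝ → 𝔸),
      ‖iteratedFDerivWithin ℝ m h I x‖ = ‖iteratedDeriv m h x‖ := by
    intro m h
    rw [iteratedFDerivWithin_of_isOpen m hI hx, norm_iteratedFDeriv_eq_norm_iteratedDeriv]
  calc ‖iteratedDeriv n (fun y => f y * g y) x‖
      = ‖iteratedFDerivWithin ℝ n (fun y => f y * g y) I x‖ := (h2 n _).symm
    _ ≤ ∑ i ∈ Finset.range (n + 1), (n.choose i : ℝ) * ‖iteratedFDerivWithin ℝ i f I x‖ *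
        ‖iteratedFDerivWithin ℝ (n - i) g I x‖ := by
        refine norm_iteratedFDerivWithin_mul_le hf hg hI.uniqueDiffOn hx ?_
        exact_mod_cast le_top
    _ = ∑ i ∈ Finset.range (n + 1), (n.choose i : ℝ) * ‖iteratedDeriv i f x‖ *
        ‖iteratedDeriv (n - i) g x‖ := by
        refine Finset.sum_congr rfl fun i _ => ?_
        rw [h2, h2]

lemma bound_mul {b : ℝ} {I : Set ℝ} (hI : IsOpen I) (hIb : Set.Ioc (0:ℝ) b ⊆ I) (hb : 0 < b)
    {f g : ℝ → 𝔸} (hf : ContDiffOn ℝ ∞ f I) (hg : ContDiffOn ℝ ∞ g I)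
    {μ ν : ℝ} (hmax : 0 ≤ μ ∨ 0 ≤ ν) (n : ℕ)
    (hCf : ∀ i : ℕ, i ≤ n → ∃ C : ℝ, 0 ≤ C ∧ ∀ x ∈ Set.Ioc (0:ℝ) b,
      ‖iteratedDeriv i f x‖ ≤ C * (1 + x ^ (μ - (i:ℝ))))
    (hCg : ∀ i : ℕ, i ≤ n → ∃ C : ℝ, 0 ≤ C ∧ ∀ x ∈ Set.Ioc (0:ℝ) b,
      ‖iteratedDeriv i g x‖ ≤ C * (1 + x ^ (ν - (i:ℝ)))) :
    ∃ C : ℝ, 0 < C ∧ ∀ x ∈ Set.Ioc (0:ℝ) b,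
      ‖iteratedDeriv n (fun y => f y * g y) x‖ ≤ C * (1 + x ^ (min μ ν - (n:ℝ))) := by
  have hCf' : ∀ i : ℕ, ∃ C : ℝ, 0 ≤ C ∧ (i ≤ n → ∀ x ∈ Set.Ioc (0:ℝ) b,
      ‖iteratedDeriv i f x‖ ≤ C * (1 + x ^ (μ - (i:ℝ)))) := by
    intro i; by_cases h : i ≤ n
    · obtain ⟨C, h0, hC⟩ := hCf i h; exact ⟨C, h0, fun _ => hC⟩
    · exact ⟨0, le_rfl, fun h' => absurd h' h⟩
  have hCg' : ∀ i : ℕ, ∃ C : ℝ, 0 ≤ C ∧ (i ≤ n → ∀ x ∈ Set.Ioc (0:ℝ) b,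
      ‖iteratedDeriv i g x‖ ≤ C * (1 + x ^ (ν - (i:ℝ)))) := by
    intro i; by_cases h : i ≤ n
    · obtain ⟨C, h0, hC⟩ := hCg i h; exact ⟨C, h0, fun _ => hC⟩
    · exact ⟨0, le_rfl, fun h' => absurd h' h⟩
  choose Cf hCf0 hCfB using hCf'
  choose Cg hCg0 hCgB using hCg'
  set d : ℝ := min μ ν - (n:ℝ) with hd
  set S : ℝ := ∑ i ∈ Finset.range (n+1),
    (n.choose i : ℝ) * Cf i * Cg (n - i) * tplK b (μ - (i:ℝ)) (ν - ((n - i : ℕ):ℝ)) d with hS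
  have hS0 : 0 ≤ S := by
    refine Finset.sum_nonneg fun i _ => ?_
    have := (tplK_pos hb (μ - (i:ℝ)) (ν - ((n - i : ℕ):ℝ)) d).le
    have h1 : (0:ℝ) ≤ (n.choose i : ℝ) := Nat.cast_nonneg _
    have := hCf0 i; have := hCg0 (n - i)
    positivity
  refine ⟨1 + S, by linarith, ?_⟩
  intro x hx
  have key := norm_itd_mul_le hI hf hg (hIb hx) n
  have hx0 := hx.1
  have htpl := (tpl_pos hx0 d).le
  have hsum : ∀ i ∈ Finset.range (n+1),
      (n.choose i:ℝ) * ‖iteratedDeriv i f x‖ * ‖iteratedDeriv (n-i) g x‖ ≤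
      ((n.choose i : ℝ) * Cf i * Cg (n - i) * tplK b (μ - (i:ℝ)) (ν - ((n - i : ℕ):ℝ)) d)
        * (1 + x ^ d) := by
    intro i hi
    have hin : i ≤ n := Finset.mem_range_succ_iff.1 hi
    have hni : ((n - i : ℕ):ℝ) = (n:ℝ) - (i:ℝ) := by
      rw [Nat.cast_sub hin]
    have hinR : (i:ℝ) ≤ (n:ℝ) := by exact_mod_cast hin
    have hiR : (0:ℝ) ≤ (i:ℝ) := Nat.cast_nonneg _
    have hfb := hCfB i hin x hx
    have hgb := hCgB (n - i) (Nat.sub_le n i) x hx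
    have hmul : ‖iteratedDeriv i f x‖ * ‖iteratedDeriv (n-i) g x‖ ≤
        (Cf i * Cg (n - i)) * ((1 + x ^ (μ - (i:ℝ))) * (1 + x ^ (ν - ((n - i : ℕ):ℝ)))) := by
      have h1 : (0:ℝ) ≤ Cf i * (1 + x ^ (μ - (i:ℝ))) :=
        mul_nonneg (hCf0 i) (tpl_pos hx0 _).le
      calc ‖iteratedDeriv i f x‖ * ‖iteratedDeriv (n-i) g x‖
          ≤ (Cf i * (1 + x ^ (μ - (i:ℝ)))) * (Cg (n-i) * (1 + x ^ (ν - ((n - i : ℕ):ℝ)))) :=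
            mul_le_mul hfb hgb (norm_nonneg _) h1
        _ = (Cf i * Cg (n - i)) * ((1 + x ^ (μ - (i:ℝ))) * (1 + x ^ (ν - ((n - i : ℕ):ℝ)))) := by
            ring
    have htm : (1 + x ^ (μ - (i:ℝ))) * (1 + x ^ (ν - ((n - i : ℕ):ℝ))) ≤
        tplK b (μ - (i:ℝ)) (ν - ((n - i : ℕ):ℝ)) d * (1 + x ^ d) := by
      refine tpl_mul hb ?_ ?_ ?_ hx
      · have := min_le_left μ ν; rw [hd]; linarith
      · have := min_le_right μ ν; rw [hd, hni]; linarith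
      · rw [hni]
        rcases le_or_gt 0 d with h0 | h0
        · rw [min_eq_right h0]
          have h1 := min_le_left μ ν; have h2 := min_le_right μ ν
          rw [hd] at h0
          linarith
        · rw [min_eq_left h0.le, hd]
          rcases hmax with h1 | h1
          · have := min_le_right μ ν; linarith
          · have := min_le_left μ ν; linarith
    calc (n.choose i:ℝ) * ‖iteratedDeriv i f x‖ * ‖iteratedDeriv (n-i) g x‖
        = (n.choose i:ℝ) * (‖iteratedDeriv i f x‖ * ‖iteratedDeriv (n-i) g x‖) := by ring
      _ ≤ (n.choose i:ℝ) * ((Cf i * Cg (n - i)) *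
            ((1 + x ^ (μ - (i:ℝ))) * (1 + x ^ (ν - ((n - i : ℕ):ℝ))))) :=
          mul_le_mul_of_nonneg_left hmul (Nat.cast_nonneg _)
      _ ≤ (n.choose i:ℝ) * ((Cf i * Cg (n - i)) *
            (tplK b (μ - (i:ℝ)) (ν - ((n - i : ℕ):ℝ)) d * (1 + x ^ d))) := by
          refine mul_le_mul_of_nonneg_left ?_ (Nat.cast_nonneg _)
          exact mul_le_mul_of_nonneg_left htm (mul_nonneg (hCf0 i) (hCg0 _))
      _ = ((n.choose i : ℝ) * Cf i * Cg (n - i) *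
            tplK b (μ - (i:ℝ)) (ν - ((n - i : ℕ):ℝ)) d) * (1 + x ^ d) := by ring
  calc ‖iteratedDeriv n (fun y => f y * g y) x‖
      ≤ ∑ i ∈ Finset.range (n + 1),
        (n.choose i : ℝ) * ‖iteratedDeriv i f x‖ * ‖iteratedDeriv (n - i) g x‖ := key
    _ ≤ ∑ i ∈ Finset.range (n+1),
        ((n.choose i : ℝ) * Cf i * Cg (n - i) * tplK b (μ - (i:ℝ)) (ν - ((n - i : ℕ):ℝ)) d)
          * (1 + x ^ d) := Finset.sum_le_sum hsum
    _ = S * (1 + x ^ d) := by rw [hS, Finset.sum_mul]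
    _ ≤ (1 + S) * (1 + x ^ d) := mul_le_mul_of_nonneg_right (by linarith) (tpl_pos hx0 d).le

lemma bndAt_of_bnd {b μ : ℝ} {f : ℝ → 𝔸} (hf : Bnd b μ f) (j : ℕ) :
    ∃ C : ℝ, 0 ≤ C ∧ ∀ x ∈ Set.Ioc (0:ℝ) b,
      ‖iteratedDeriv j f x‖ ≤ C * (1 + x ^ (μ - (j:ℝ))) :=
  (hf j).imp fun _C hC => ⟨hC.1.le, hC.2⟩

lemma bnd_mono {b μ ν : ℝ} {f : ℝ → 𝔸} (hb : 0 < b) (h : ν ≤ μ) (hf : Bnd b μ f) :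
    Bnd b ν f := by
  intro j
  obtain ⟨C, hC0, hC⟩ := hf j
  set K : ℝ := b ^ (μ - (j:ℝ)) + b ^ ((μ - (j:ℝ)) - (ν - (j:ℝ)))
  have hK : 0 < K := by
    have := Real.rpow_pos_of_pos hb (μ - (j:ℝ))
    have := Real.rpow_pos_of_pos hb ((μ - (j:ℝ)) - (ν - (j:ℝ)))
    positivity
  refine ⟨C * (1 + K), by positivity, fun x hx => ?_⟩
  have h1 := rpow_le_tpl (a := μ - (j:ℝ)) (d := ν - (j:ℝ)) hb (fun _ => by linarith) hx
  have h2 : (1:ℝ) ≤ 1 + x ^ (ν - (j:ℝ)) := by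
    have := Real.rpow_pos_of_pos hx.1 (ν - (j:ℝ)); linarith
  have h1' : x ^ (μ - (j:ℝ)) ≤ K * (1 + x ^ (ν - (j:ℝ))) := h1
  have h3 : 1 + x ^ (μ - (j:ℝ)) ≤ (1 + K) * (1 + x ^ (ν - (j:ℝ))) := by nlinarith
  calc ‖iteratedDeriv j f x‖ ≤ C * (1 + x ^ (μ - (j:ℝ))) := hC x hx
    _ ≤ C * ((1 + K) * (1 + x ^ (ν - (j:ℝ)))) := mul_le_mul_of_nonneg_left h3 hC0.le
    _ = C * (1 + K) * (1 + x ^ (ν - (j:ℝ))) := by ring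

lemma bnd_const_mul {𝕜 : Type*} [NontriviallyNormedField 𝕜] [NormedAlgebra ℝ 𝕜]
    {b μ : ℝ} {f : ℝ → 𝕜} (c : 𝕜) (hf : Bnd b μ f) : Bnd b μ (fun x => c * f x) := by
  intro j
  obtain ⟨C, hC0, hC⟩ := hf j
  refine ⟨(‖c‖ + 1) * C, by positivity, fun x hx => ?_⟩
  rw [itd_const_mul]
  calc ‖c * iteratedDeriv j f x‖ ≤ ‖c‖ * ‖iteratedDeriv j f x‖ := norm_mul_le _ _
    _ ≤ ‖c‖ * (C * (1 + x ^ (μ - (j:ℝ)))) :=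
      mul_le_mul_of_nonneg_left (hC x hx) (norm_nonneg _)
    _ ≤ (‖c‖ + 1) * C * (1 + x ^ (μ - (j:ℝ))) := by
      have := tpl_pos hx.1 (μ - (j:ℝ)); nlinarith

lemma bnd_congr {b μ : ℝ} {I : Set ℝ} (hI : IsOpen I) (hIb : Set.Ioc (0:ℝ) b ⊆ I)
    {f g : ℝ → 𝔸} (hEq : Set.EqOn f g I) (hf : Bnd b μ f) : Bnd b μ g := by
  intro j
  obtain ⟨C, hC0, hC⟩ := hf j
  refine ⟨C, hC0, fun x hx => ?_⟩
  rw [← hEq.iteratedDeriv_of_isOpen hI j (hIb hx)]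
  exact hC x hx

lemma bnd_shift {b μ : ℝ} {f : ℝ → 𝔸} (hf : Bnd b μ f) (m : ℕ) :
    Bnd b (μ - (m:ℝ)) (iteratedDeriv m f) := by
  intro j
  obtain ⟨C, hC0, hC⟩ := hf (j + m)
  refine ⟨C, hC0, fun x hx => ?_⟩
  have he : μ - ((j + m : ℕ):ℝ) = (μ - (m:ℝ)) - (j:ℝ) := by push_cast; ring
  rw [itd_itd]
  have := hC x hx
  rwa [he] at this

/-- any globally smooth function is in every symbol class -/

lemma bnd_of_contDiff {b μ : ℝ} (hb : 0 < b) {f : ℝ → ℝ} (hf : ContDiff ℝ ∞ f) :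
    Bnd b μ f := by
  intro j
  obtain ⟨M, hM⟩ := (isCompact_Icc (a := (0:ℝ)) (b := b)).exists_bound_of_continuousOn
    ((hf.continuous_iteratedDeriv j (by exact_mod_cast le_top)).continuousOn)
  refine ⟨|M| + 1, by positivity, fun x hx => ?_⟩
  have h1 : ‖iteratedDeriv j f x‖ ≤ M := hM x ⟨hx.1.le, hx.2⟩
  have h2 : (1:ℝ) ≤ 1 + x ^ (μ - (j:ℝ)) := by
    have := Real.rpow_pos_of_pos hx.1 (μ - (j:ℝ)); linarith
  have h3 : M ≤ |M| := le_abs_self M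
  nlinarith [abs_nonneg M]

/-- ODE-driven symbol bounds: if `u' = r u` on `I` with `r` of class `γ-1`
(possibly established using lower-order bounds on `u`), and `u` is bounded,
then `u` is of class `γ`. -/

lemma ode_bnd {b γ : ℝ} {I : Set ℝ} (hI : IsOpen I) (hIb : Set.Ioc (0:ℝ) b ⊆ I)
    (hb : 0 < b) (hγ : 0 < γ) {u r : ℝ → 𝔸}
    (hu : ContDiffOn ℝ ∞ u I) (hr : ContDiffOn ℝ ∞ r I)
    (hode : Set.EqOn (deriv u) (fun y => r y * u y) I)
    (hrB : ∀ n : ℕ, (∀ j, j ≤ n → BndAt b γ u j) →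
      ∀ i, i ≤ n → ∃ C : ℝ, 0 ≤ C ∧ ∀ x ∈ Set.Ioc (0:ℝ) b,
        ‖iteratedDeriv i r x‖ ≤ C * (1 + x ^ ((γ - 1) - (i:ℝ))))
    (hu0 : BndAt b γ u 0) : Bnd b γ u := by
  have key : ∀ n : ℕ, ∀ j, j ≤ n → BndAt b γ u j := by
    intro n
    induction n with
    | zero => intro j hj; rw [Nat.le_zero.1 hj]; exact hu0
    | succ n ih =>
      intro j hj
      rcases Nat.lt_succ_iff_lt_or_eq.1 (Nat.lt_succ_of_le hj) with h | rfl
      · exact ih j (Nat.lt_succ_iff.1 h)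
      · -- j = n+1
        have hpart : ∀ i : ℕ, i ≤ n → ∃ C : ℝ, 0 ≤ C ∧ ∀ x ∈ Set.Ioc (0:ℝ) b,
            ‖iteratedDeriv i u x‖ ≤ C * (1 + x ^ (γ - (i:ℝ))) := fun i hi =>
          (ih i hi).imp fun _C hC => ⟨hC.1.le, hC.2⟩
        obtain ⟨C, hC0, hC⟩ := bound_mul hI hIb hb hr hu (Or.inr hγ.le) n
          (hrB n ih) hpart
        refine ⟨C, hC0, fun x hx => ?_⟩
        have h1 : iteratedDeriv (n+1) u x = iteratedDeriv n (deriv u) x := by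
          rw [iteratedDeriv_succ']
        have h2 : iteratedDeriv n (deriv u) x = iteratedDeriv n (fun y => r y * u y) x :=
          hode.iteratedDeriv_of_isOpen hI n (hIb hx)
        have h3 := hC x hx
        have he : min (γ - 1) γ - (n:ℝ) = γ - ((n+1 : ℕ):ℝ) := by
          rw [min_eq_left (by linarith)]; push_cast; ring
        rw [h1, h2]
        rw [he] at h3
        exact h3
  exact fun j => key j j le_rfl

lemma integral_tpl_le {b x μ : ℝ} (hb : 0 < b) (hμ : μ + 1 ≠ 0) (hx : x ∈ Set.Ioc (0:ℝ) b) :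
    ∫ y in x..b, (1 + y ^ μ) ≤ (b + b ^ (μ+1) / |μ+1| + 1 / |μ+1|) * (1 + x ^ (μ+1)) := by
  obtain ⟨hx0, hxb⟩ := hx
  have h0 : (0:ℝ) ∉ Set.uIcc x b := Set.notMem_uIcc_of_lt hx0 hb
  have hμ' : μ ≠ -1 := fun h => hμ (by rw [h]; ring)
  have hint1 : IntervalIntegrable (fun y : ℝ => y ^ μ) volume x b :=
    intervalIntegrable_rpow (Or.inr h0)
  rw [intervalIntegral.integral_add intervalIntegrable_const hint1,
    intervalIntegral.integral_const, integral_rpow (Or.inr ⟨hμ', h0⟩)]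
  have hxe : (0:ℝ) < x ^ (μ+1) := Real.rpow_pos_of_pos hx0 _
  have hbe : (0:ℝ) < b ^ (μ+1) := Real.rpow_pos_of_pos hb _
  rcases lt_or_gt_of_ne hμ with he | he
  · -- μ + 1 < 0
    have habs : |μ+1| = -(μ+1) := abs_of_neg he
    rw [habs]
    have h1 : (b ^ (μ+1) - x ^ (μ+1)) / (μ+1) = (x ^ (μ+1) - b ^ (μ+1)) / (-(μ+1)) := by
      rw [div_neg, ← neg_div, neg_sub]
    rw [h1]
    have h2 : (x ^ (μ+1) - b ^ (μ+1)) / (-(μ+1)) ≤ x ^ (μ+1) / (-(μ+1)) := by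
      gcongr <;> linarith
    have h3 : (0:ℝ) < 1 / (-(μ+1)) := one_div_pos.mpr (by linarith)
    have h4 : x ^ (μ+1) / (-(μ+1)) = (1 / (-(μ+1))) * x ^ (μ+1) := by ring
    simp only [smul_eq_mul, mul_one]
    have p1 : (0:ℝ) < b * x ^ (μ+1) := mul_pos hb hxe
    have p3 : (0:ℝ) < b ^ (μ+1) / (-(μ+1)) := div_pos hbe (by linarith)
    have p2 : (0:ℝ) < (b ^ (μ+1) / (-(μ+1))) * x ^ (μ+1) := mul_pos p3 hxe
    nlinarith [hbe, hxe]
  · have habs : |μ+1| = μ+1 := abs_of_pos he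
    rw [habs]
    have h2 : (b ^ (μ+1) - x ^ (μ+1)) / (μ+1) ≤ b ^ (μ+1) / (μ+1) := by
      gcongr <;> linarith
    have h3 : (0:ℝ) < b ^ (μ+1) / (μ+1) := div_pos hbe he
    simp only [smul_eq_mul, mul_one]
    have p2 : (0:ℝ) < 1 / (μ+1) := one_div_pos.mpr he
    have p1 : (0:ℝ) < (b + b ^ (μ+1) / (μ+1) + 1 / (μ+1)) * x ^ (μ+1) :=
      mul_pos (by linarith) hxe
    nlinarith [hbe, hxe]

lemma bnd_integral {b η : ℝ} (hb : 0 < b) (hη : 0 < η)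
    {h : ℝ → ℂ} (hhcd : ContDiffOn ℝ ∞ h (Set.Ioo 0 (b+η))) {μ : ℝ} (hμ : μ + 1 ≠ 0)
    (hhB : Bnd b μ h) :
    ContDiffOn ℝ ∞ (fun x => ∫ y in x..b, h y) (Set.Ioo 0 (b+η)) ∧
      Bnd b (μ+1) (fun x => ∫ y in x..b, h y) := by
  set I : Set ℝ := Set.Ioo 0 (b+η) with hIdef
  have hI : IsOpen I := isOpen_Ioo
  have hbI : b ∈ I := ⟨hb, by linarith⟩
  have hIb : Set.Ioc (0:ℝ) b ⊆ I := fun y hy => ⟨hy.1, by have := hy.2; linarith⟩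
  have huIcc : ∀ x ∈ I, Set.uIcc x b ⊆ I := by
    intro x hx y hy
    rcases Set.mem_uIcc.mp hy with ⟨h1, h2⟩ | ⟨h1, h2⟩
    · exact ⟨lt_of_lt_of_le hx.1 h1, lt_of_le_of_lt h2 hbI.2⟩
    · exact ⟨lt_of_lt_of_le hb h1, lt_of_le_of_lt h2 hx.2⟩
  have hInt : ∀ x ∈ I, IntervalIntegrable h volume x b := fun x hx =>
    (hhcd.continuousOn.mono (huIcc x hx)).intervalIntegrable
  have hDer : ∀ x ∈ I, HasDerivAt (fun u => ∫ y in u..b, h y) (-(h x)) x := by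
    intro x hx
    exact intervalIntegral.integral_hasDerivAt_left (hInt x hx)
      (ContinuousOn.stronglyMeasurableAtFilter hI hhcd.continuousOn x hx)
      (hhcd.continuousOn.continuousAt (hI.mem_nhds hx))
  have hEq : Set.EqOn (deriv (fun x => ∫ y in x..b, h y)) (fun y => -(h y)) I :=
    fun x hx => (hDer x hx).deriv
  have hFcd : ContDiffOn ℝ ∞ (fun x => ∫ y in x..b, h y) I := by
    rw [contDiffOn_infty_iff_deriv_of_isOpen hI]
    refine ⟨fun x hx => (hDer x hx).differentiableAt.differentiableWithinAt, ?_⟩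
    exact (hhcd.neg).congr fun x hx => hEq hx
  refine ⟨hFcd, ?_⟩
  intro j
  cases j with
  | zero =>
    obtain ⟨C, hC0, hC⟩ := hhB 0
    refine ⟨C * (b + b ^ (μ+1) / |μ+1| + 1 / |μ+1|) + 1, by positivity, fun x hx => ?_⟩
    have hx0 := hx.1
    have hxb := hx.2
    have hIx : x ∈ I := hIb hx
    have hnorm : ‖∫ y in x..b, h y‖ ≤ ∫ y in x..b, ‖h y‖ :=
      intervalIntegral.norm_integral_le_integral_norm hxb
    have hmono : ∫ y in x..b, ‖h y‖ ≤ ∫ y in x..b, C * (1 + y ^ μ) := by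
      have hi1 : IntervalIntegrable (fun y => ‖h y‖) volume x b := (hInt x hIx).norm
      have hi2 : IntervalIntegrable (fun y => C * (1 + y ^ μ)) volume x b := by
        have h0 : (0:ℝ) ∉ Set.uIcc x b := Set.notMem_uIcc_of_lt hx0 hb
        exact (intervalIntegrable_const.add (intervalIntegrable_rpow (Or.inr h0))).const_mul C
      refine intervalIntegral.integral_mono_on hxb hi1 hi2 ?_
      intro y hy
      have hyI : y ∈ Set.Ioc (0:ℝ) b := ⟨lt_of_lt_of_le hx0 hy.1, hy.2⟩
      have := hC y hyI
      simpa using this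
    have hpull : ∫ y in x..b, C * (1 + y ^ μ) = C * ∫ y in x..b, (1 + y ^ μ) :=
      intervalIntegral.integral_const_mul C _
    have hval := integral_tpl_le hb hμ hx
    have htl : (0:ℝ) < 1 + x ^ (μ+1) := tpl_pos hx0 _
    have hfin : C * ∫ y in x..b, (1 + y ^ μ) ≤
        C * ((b + b ^ (μ+1) / |μ+1| + 1 / |μ+1|) * (1 + x ^ (μ+1))) :=
      mul_le_mul_of_nonneg_left hval hC0.le
    have hgoal : ‖∫ y in x..b, h y‖ ≤
        (C * (b + b ^ (μ+1) / |μ+1| + 1 / |μ+1|)) * (1 + x ^ (μ+1)) := by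
      calc ‖∫ y in x..b, h y‖ ≤ ∫ y in x..b, ‖h y‖ := hnorm
        _ ≤ ∫ y in x..b, C * (1 + y ^ μ) := hmono
        _ = C * ∫ y in x..b, (1 + y ^ μ) := hpull
        _ ≤ C * ((b + b ^ (μ+1) / |μ+1| + 1 / |μ+1|) * (1 + x ^ (μ+1))) := hfin
        _ = (C * (b + b ^ (μ+1) / |μ+1| + 1 / |μ+1|)) * (1 + x ^ (μ+1)) := by ring
    have : ((μ:ℝ) + 1 - ((0:ℕ):ℝ)) = μ + 1 := by push_cast; ring
    rw [iteratedDeriv_zero]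
    rw [this]
    refine hgoal.trans ?_
    have hKn : (0:ℝ) ≤ C * (b + b ^ (μ+1) / |μ+1| + 1 / |μ+1|) := by
      have : ‖∫ y in x..b, h y‖ ≥ 0 := norm_nonneg _
      nlinarith [hgoal, htl]
    nlinarith [htl]
  | succ j =>
    obtain ⟨C, hC0, hC⟩ := hhB j
    refine ⟨C, hC0, fun x hx => ?_⟩
    have h1 : iteratedDeriv (j+1) (fun x => ∫ y in x..b, h y) x =
        iteratedDeriv j (deriv (fun x => ∫ y in x..b, h y)) x := by
      rw [iteratedDeriv_succ']
    have h2 : iteratedDeriv j (deriv (fun x => ∫ y in x..b, h y)) x =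
        iteratedDeriv j (fun y => -(h y)) x :=
      hEq.iteratedDeriv_of_isOpen hI j (hIb hx)
    have h3 : iteratedDeriv j (fun y => -(h y)) x = -(iteratedDeriv j h x) :=
      iteratedDeriv_neg j h x
    rw [h1, h2, h3, norm_neg]
    have he : μ - (j:ℝ) = (μ + 1) - ((j+1 : ℕ):ℝ) := by push_cast; ring
    have := hC x hx
    rwa [he] at this

lemma bnd_rpow {b η γ δ : ℝ} (hb : 0 < b) (hη : 0 < η) (hγ : 0 < γ) (hδ : 0 < δ)
    {g0 : ℝ → ℝ} (hg0cd : ContDiffOn ℝ ∞ g0 (Set.Ioo 0 (b+η)))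
    (hg0pos : ∀ x ∈ Set.Ioo (0:ℝ) (b+η), 0 < g0 x)
    (hg0δ : ∀ x ∈ Set.Ioc (0:ℝ) b, δ ≤ g0 x)
    (hg0B : Bnd b γ g0)
    (c : ℝ) (M : ℝ) (hM : ∀ x ∈ Set.Ioc (0:ℝ) b, g0 x ^ c ≤ M) :
    Bnd b γ (fun x => g0 x ^ c) := by
  set I : Set ℝ := Set.Ioo 0 (b+η) with hIdef
  have hI : IsOpen I := isOpen_Ioo
  have hIb : Set.Ioc (0:ℝ) b ⊆ I := fun y hy => ⟨hy.1, by have := hy.2; linarith⟩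
  have hdg0 : ContDiffOn ℝ ∞ (deriv g0) I :=
    ((contDiffOn_infty_iff_deriv_of_isOpen hI).1 hg0cd).2
  have hg0' : Bnd b (γ-1) (deriv g0) := by
    have h := bnd_shift hg0B 1
    rw [Nat.cast_one, iteratedDeriv_one] at h
    exact h
  have hg0da : ∀ y ∈ I, HasDerivAt g0 (deriv g0 y) y := by
    intro y hy
    refine DifferentiableAt.hasDerivAt ?_
    have := (hg0cd.contDiffAt (hI.mem_nhds hy))
    exact this.differentiableAt (by simp)
  set v : ℝ → ℝ := fun x => (g0 x)⁻¹ with hvdef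
  have hvcd : ContDiffOn ℝ ∞ v I := hg0cd.inv (fun x hx => (hg0pos x hx).ne')
  have hv0 : BndAt b γ v 0 := by
    refine ⟨δ⁻¹ + 1, by positivity, fun x hx => ?_⟩
    rw [iteratedDeriv_zero]
    have hgx := hg0δ x hx
    have hgpos : 0 < g0 x := lt_of_lt_of_le hδ hgx
    have h1 : ‖v x‖ ≤ δ⁻¹ := by
      simp only [hvdef, Real.norm_eq_abs]
      rw [abs_of_pos (inv_pos.mpr hgpos)]
      exact inv_anti₀ hδ hgx
    have h2 : (1:ℝ) ≤ 1 + x ^ (γ - ((0:ℕ):ℝ)) := by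
      have := Real.rpow_pos_of_pos hx.1 (γ - ((0:ℕ):ℝ)); linarith
    nlinarith [inv_pos.mpr hδ, mul_nonneg (by positivity : (0:ℝ) ≤ δ⁻¹+1)
      (by linarith : (0:ℝ) ≤ x ^ (γ - ((0:ℕ):ℝ)))]
  have hvode : Set.EqOn (deriv v) (fun y => (((-1:ℝ) * deriv g0 y) * v y) * v y) I := by
    intro y hy
    have hne := (hg0pos y hy).ne'
    have hd : HasDerivAt v (-deriv g0 y / g0 y ^ 2) y := (hg0da y hy).inv hne
    rw [hd.deriv]
    show -deriv g0 y / g0 y ^ 2 = ((-1) * deriv g0 y * (g0 y)⁻¹) * (g0 y)⁻¹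
    rw [div_eq_mul_inv, sq, mul_inv]
    ring
  have hrvcd : ContDiffOn ℝ ∞ (fun y => ((-1:ℝ) * deriv g0 y) * v y) I :=
    (contDiffOn_const.mul hdg0).mul hvcd
  have hvB : Bnd b γ v := by
    refine ode_bnd hI hIb hb hγ hvcd hrvcd hvode ?_ hv0
    intro n pu i hi
    have hCf : ∀ i' : ℕ, i' ≤ i → ∃ C : ℝ, 0 ≤ C ∧ ∀ x ∈ Set.Ioc (0:ℝ) b,
        ‖iteratedDeriv i' (fun y => (-1:ℝ) * deriv g0 y) x‖ ≤ C * (1 + x ^ ((γ-1) - (i':ℝ))) :=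
      fun i' _ => bndAt_of_bnd (bnd_const_mul (-1:ℝ) hg0') i'
    have hCg : ∀ i' : ℕ, i' ≤ i → ∃ C : ℝ, 0 ≤ C ∧ ∀ x ∈ Set.Ioc (0:ℝ) b,
        ‖iteratedDeriv i' v x‖ ≤ C * (1 + x ^ (γ - (i':ℝ))) := by
      intro i' hi'
      obtain ⟨C, hC0, hC⟩ := pu i' (le_trans hi' hi)
      exact ⟨C, hC0.le, hC⟩
    obtain ⟨C, hC0, hC⟩ := bound_mul hI hIb hb (contDiffOn_const.mul hdg0) hvcd
      (Or.inr hγ.le) i hCf hCg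
    rw [min_eq_left (by linarith : γ - 1 ≤ γ)] at hC
    exact ⟨C, hC0.le, hC⟩
  -- now the power function
  set u : ℝ → ℝ := fun x => g0 x ^ c with hudef
  have hucd : ContDiffOn ℝ ∞ u I := hg0cd.rpow_const_of_ne (fun x hx => (hg0pos x hx).ne')
  have hu0 : BndAt b γ u 0 := by
    refine ⟨|M| + 1, by positivity, fun x hx => ?_⟩
    rw [iteratedDeriv_zero]
    have hgpos : 0 < g0 x := lt_of_lt_of_le hδ (hg0δ x hx)
    have h1 : ‖u x‖ ≤ |M| := by
      simp only [hudef, Real.norm_eq_abs]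
      rw [abs_of_pos (Real.rpow_pos_of_pos hgpos c)]
      exact le_trans (hM x hx) (le_abs_self M)
    have h2 : (1:ℝ) ≤ 1 + x ^ (γ - ((0:ℕ):ℝ)) := by
      have := Real.rpow_pos_of_pos hx.1 (γ - ((0:ℕ):ℝ)); linarith
    nlinarith [abs_nonneg M, mul_nonneg (by positivity : (0:ℝ) ≤ |M|+1)
      (by linarith : (0:ℝ) ≤ x ^ (γ - ((0:ℕ):ℝ)))]
  have hrccd : ContDiffOn ℝ ∞ (fun y => (c * deriv g0 y) * v y) I :=
    (contDiffOn_const.mul hdg0).mul hvcd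
  have hrcB : ∀ i : ℕ, ∃ C : ℝ, 0 ≤ C ∧ ∀ x ∈ Set.Ioc (0:ℝ) b,
      ‖iteratedDeriv i (fun y => (c * deriv g0 y) * v y) x‖ ≤
        C * (1 + x ^ ((γ-1) - (i:ℝ))) := by
    intro i
    obtain ⟨C, hC0, hC⟩ := bound_mul hI hIb hb (contDiffOn_const.mul hdg0) hvcd
      (Or.inr hγ.le) i (fun i' _ => bndAt_of_bnd (bnd_const_mul c hg0') i')
      (fun i' _ => bndAt_of_bnd hvB i')
    rw [min_eq_left (by linarith : γ - 1 ≤ γ)] at hC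
    exact ⟨C, hC0.le, hC⟩
  have huode : Set.EqOn (deriv u) (fun y => ((c * deriv g0 y) * v y) * u y) I := by
    intro y hy
    have hgpos := hg0pos y hy
    have hd := (hg0da y hy).rpow_const (p := c) (Or.inl hgpos.ne')
    rw [hd.deriv]
    have hsub : g0 y ^ (c - 1) = g0 y ^ c / g0 y := by
      rw [Real.rpow_sub hgpos, Real.rpow_one]
    rw [hsub]
    show deriv g0 y * c * (g0 y ^ c / g0 y) = ((c * deriv g0 y) * (g0 y)⁻¹) * g0 y ^ c
    rw [div_eq_mul_inv]
    ring
  exact ode_bnd hI hIb hb hγ hucd hrccd huode (fun n _ i _ => hrcB i) hu0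

/-- symbol bound for the pure power function -/
lemma itd_rpow (γ : ℝ) (j : ℕ) : ∀ x : ℝ, 0 < x →
    iteratedDeriv j (fun y : ℝ => y ^ γ) x =
      (∏ i ∈ Finset.range j, (γ - i)) * x ^ (γ - j) := by
  induction j with
  | zero => intro x hx; simp [iteratedDeriv_zero]
  | succ j ih =>
    intro x hx
    rw [iteratedDeriv_succ]
    have hev : (iteratedDeriv j (fun y : ℝ => y ^ γ)) =ᶠ[nhds x]
        (fun y => (∏ i ∈ Finset.range j, (γ - i)) * y ^ (γ - j)) := by
      filter_upwards [IsOpen.mem_nhds isOpen_Ioi (show x ∈ Set.Ioi (0:ℝ) from hx)] with y hy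
      exact ih y hy
    rw [hev.deriv_eq, deriv_const_mul_field]
    have hd : HasDerivAt (fun y : ℝ => y ^ (γ - (j:ℝ))) ((γ - j) * x ^ (γ - (j:ℝ) - 1)) x :=
      Real.hasDerivAt_rpow_const (Or.inl hx.ne')
    rw [hd.deriv, Finset.prod_range_succ]
    have he : γ - ((j+1:ℕ):ℝ) = γ - (j:ℝ) - 1 := by push_cast; ring
    rw [he]
    ring

lemma itd_const_sub (c : ℝ) (f : ℝ → ℝ) (n : ℕ) :
    iteratedDeriv (n+1) (fun x => c - f x) = fun x => -(iteratedDeriv (n+1) f x) := by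
  rw [iteratedDeriv_succ', iteratedDeriv_succ']
  have h : deriv (fun x => c - f x) = fun x => -(deriv f x) := by
    funext x; exact deriv_const_sub c
  rw [h]
  funext x
  exact iteratedDeriv_neg n (deriv f) x

lemma bnd_ofReal {b μ : ℝ} {f : ℝ → ℝ} (hf : Bnd b μ f) :
    Bnd b μ (fun x => ((f x : ℝ) : ℂ)) := by
  intro j
  obtain ⟨C, hC0, hC⟩ := hf j
  refine ⟨C, hC0, fun x hx => ?_⟩
  rw [itd_ofReal]
  simpa [Complex.norm_real] using hC x hx

end WKBAux

/-- `p_N(f) = max_{0 ≤ k ≤ N} sup_{[0,b]} |f^{(k)}|`, the `C^N` sup-norm on `[0,b]`. -/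
noncomputable def pNorm (b : ℝ) (N : ℕ) (f : ℝ → ℝ) : ℝ :=
  ⨆ k : Fin (N + 1), ⨆ x : Set.Icc (0 : ℝ) b, |iteratedDeriv k f x|

/-- Bounds on the WKB amplitudes for the potential `V(x) = x^γ W(x)`, `γ > 0` not an
integer: for each `k` there are `C_k`, `N_k`, `σ_k` with
`|A_k(x)| ≤ C_k (1 + x^{γ-k})(1 + p_{N_k}(W))^{σ_k}` on `(0,b]`. -/
theorem wkb_amplitude_bounds (b γ E δ : ℝ) (hb : 0 < b) (hγ : 0 < γ)
    (hγnotint : ∀ n : ℕ, γ ≠ n) (hδ : 0 < δ)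
    (W : ℝ → ℝ) (hW : ContDiff ℝ (⊤ : ℕ∞) W)
    (hWpos : ∀ x ∈ Set.Icc (0 : ℝ) b, 0 < W x)
    (hgap : ∀ x ∈ Set.Icc (0 : ℝ) b, δ ≤ E - x ^ γ * W x)
    (A : ℕ → ℝ → ℂ)
    (hA0 : ∀ x : ℝ, A 0 x = (((E - x ^ γ * W x) ^ (-(1 / 4 : ℝ)) : ℝ) : ℂ))
    (hArec : ∀ k : ℕ, ∀ x : ℝ, A (k + 1) x = (Complex.I / 2) * A 0 x *
      ∫ y in x..b, iteratedDeriv 2 (A k) y * (A 0 y)⁻¹) :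
    ∀ k : ℕ, ∃ (C : ℝ) (N σ : ℕ), ∀ x ∈ Set.Ioc (0 : ℝ) b,
      ‖A k x‖ ≤ C * (1 + x ^ (γ - k)) * (1 + pNorm b N W) ^ σ := by
  classical
  open WKBAux in
  -- the potential denominator
  set g0 : ℝ → ℝ := fun x => E - x ^ γ * W x with hg0def
  have hWc : ContDiff ℝ ∞ W := hW.of_le (by simp)
  -- find `η` so that `g0 > 0` on `(0, b+η)`
  have hg0contb : ContinuousAt g0 b := by
    have h1 : ContinuousAt (fun x : ℝ => x ^ γ) b :=
      Real.continuousAt_rpow_const b γ (Or.inl hb.ne')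
    exact (continuousAt_const.sub (h1.mul hWc.continuous.continuousAt))
  have hg0b : 0 < g0 b := lt_of_lt_of_le hδ (hgap b ⟨hb.le, le_rfl⟩)
  have hev : ∀ᶠ y in nhds b, 0 < g0 y := hg0contb.eventually (eventually_gt_nhds hg0b)
  obtain ⟨η, hη, hball⟩ := Metric.eventually_nhds_iff.1 hev
  set I : Set ℝ := Set.Ioo 0 (b + η) with hIdef
  have hI : IsOpen I := isOpen_Ioo
  have hIb : Set.Ioc (0:ℝ) b ⊆ I := fun y hy => ⟨hy.1, by have := hy.2; linarith⟩
  have hIcc : Set.Ioc (0:ℝ) b ⊆ Set.Icc (0:ℝ) b := fun y hy => ⟨hy.1.le, hy.2⟩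
  have hg0pos : ∀ x ∈ I, 0 < g0 x := by
    intro x hx
    rcases le_or_gt x b with h | h
    · exact lt_of_lt_of_le hδ (hgap x ⟨hx.1.le, h⟩)
    · refine hball ?_
      rw [Real.dist_eq, abs_of_pos (by linarith : 0 < x - b)]
      have := hx.2; linarith
  have hg0δ : ∀ x ∈ Set.Ioc (0:ℝ) b, δ ≤ g0 x := fun x hx => hgap x (hIcc hx)
  have hg0E : ∀ x ∈ Set.Ioc (0:ℝ) b, g0 x ≤ E := by
    intro x hx
    have h1 : 0 < x ^ γ := Real.rpow_pos_of_pos hx.1 γ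
    have h2 : 0 < W x := hWpos x (hIcc hx)
    have : 0 ≤ x ^ γ * W x := le_of_lt (mul_pos h1 h2)
    simp only [hg0def]; linarith
  have hE : 0 < E := lt_of_lt_of_le (lt_of_lt_of_le hδ (hg0δ b ⟨hb, le_rfl⟩)) (hg0E b ⟨hb, le_rfl⟩)
  -- smoothness of g0 on I
  have hPcd : ContDiffOn ℝ ∞ (fun y : ℝ => y ^ γ) I := by
    intro x hx
    exact (Real.contDiffAt_rpow_const_of_ne (ne_of_gt hx.1)).contDiffWithinAt
  have hg0cd : ContDiffOn ℝ ∞ g0 I :=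
    contDiffOn_const.sub (hPcd.mul hWc.contDiffOn)
  -- symbol bounds for the power function
  have hPB : Bnd b γ (fun y : ℝ => y ^ γ) := by
    intro j
    refine ⟨|∏ i ∈ Finset.range j, (γ - i)| + 1, by positivity, fun x hx => ?_⟩
    rw [itd_rpow γ j x hx.1]
    have h1 : 0 < x ^ (γ - (j:ℝ)) := Real.rpow_pos_of_pos hx.1 _
    rw [norm_mul, Real.norm_eq_abs, Real.norm_eq_abs, abs_of_pos h1]
    nlinarith [abs_nonneg (∏ i ∈ Finset.range j, (γ - i)),
      mul_nonneg (by positivity : (0:ℝ) ≤ |∏ i ∈ Finset.range j, (γ - i)| + 1) h1.le]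
  -- symbol bounds for x^γ * W x
  have hPWB : Bnd b γ (fun y : ℝ => y ^ γ * W y) := by
    intro j
    obtain ⟨C, hC0, hC⟩ := bound_mul hI hIb hb hPcd hWc.contDiffOn (Or.inl hγ.le) j
      (fun i _ => bndAt_of_bnd hPB i)
      (fun i _ => bndAt_of_bnd (bnd_of_contDiff hb hWc (μ := γ)) i)
    rw [min_self] at hC
    exact ⟨C, hC0, hC⟩
  -- symbol bounds for g0
  have hg0B : Bnd b γ g0 := by
    intro j
    cases j with
    | zero =>
      refine ⟨E + 1, by linarith, fun x hx => ?_⟩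
      rw [iteratedDeriv_zero]
      have h1 : ‖g0 x‖ ≤ E := by
        rw [Real.norm_eq_abs, abs_of_pos (lt_of_lt_of_le hδ (hg0δ x hx))]
        exact hg0E x hx
      have h2 : (0:ℝ) < 1 + x ^ (γ - ((0:ℕ):ℝ)) := tpl_pos hx.1 _
      nlinarith [mul_nonneg (by linarith : (0:ℝ) ≤ E+1)
        (by nlinarith [Real.rpow_pos_of_pos hx.1 (γ - ((0:ℕ):ℝ))] : (0:ℝ) ≤ x ^ (γ - ((0:ℕ):ℝ)))]
    | succ j =>
      obtain ⟨C, hC0, hC⟩ := hPWB (j+1)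
      refine ⟨C, hC0, fun x hx => ?_⟩
      have h1 : iteratedDeriv (j+1) g0 x = -(iteratedDeriv (j+1) (fun y : ℝ => y ^ γ * W y) x) := by
        rw [hg0def]
        exact congrFun (itd_const_sub E _ j) x
      rw [h1, norm_neg]
      exact hC x hx
  -- the real amplitude building blocks
  set f0 : ℝ → ℝ := fun x => g0 x ^ (-(1/4 : ℝ)) with hf0def
  set w0 : ℝ → ℝ := fun x => g0 x ^ ((1/4 : ℝ)) with hw0def
  have hf0B : Bnd b γ f0 := by
    refine bnd_rpow hb hη hγ hδ hg0cd hg0pos hg0δ hg0B _ (δ ^ (-(1/4:ℝ))) ?_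
    intro x hx
    exact Real.rpow_le_rpow_of_nonpos hδ (hg0δ x hx) (by norm_num)
  have hw0B : Bnd b γ w0 := by
    refine bnd_rpow hb hη hγ hδ hg0cd hg0pos hg0δ hg0B _ (E ^ ((1/4:ℝ))) ?_
    intro x hx
    exact Real.rpow_le_rpow (le_of_lt (lt_of_lt_of_le hδ (hg0δ x hx))) (hg0E x hx) (by norm_num)
  have hf0cd : ContDiffOn ℝ ∞ f0 I :=
    hg0cd.rpow_const_of_ne (fun x hx => (hg0pos x hx).ne')
  -- the complex amplitude A 0
  have hA0fun : A 0 = fun x => ((f0 x : ℝ) : ℂ) := funext hA0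
  have hA0cd : ContDiffOn ℝ ∞ (A 0) I := by
    rw [hA0fun]
    exact Complex.ofRealCLM.contDiff.comp_contDiffOn hf0cd
  have hA0B : Bnd b γ (A 0) := by
    rw [hA0fun]; exact bnd_ofReal hf0B
  have hA0ne : ∀ y ∈ I, A 0 y ≠ 0 := by
    intro y hy
    rw [hA0 y]
    exact Complex.ofReal_ne_zero.mpr (Real.rpow_pos_of_pos (hg0pos y hy) _).ne'
  have hA0invcd : ContDiffOn ℝ ∞ (fun y => (A 0 y)⁻¹) I := hA0cd.inv hA0ne
  have hA0invB : Bnd b γ (fun y => (A 0 y)⁻¹) := by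
    refine bnd_congr hI hIb (f := fun y => ((w0 y : ℝ) : ℂ)) ?_ (bnd_ofReal hw0B)
    intro y hy
    have hgp := hg0pos y hy
    show ((w0 y : ℝ) : ℂ) = (A 0 y)⁻¹
    rw [hA0 y]
    have h1 : (E - y ^ γ * W y) ^ (-(1 / 4 : ℝ)) = (w0 y)⁻¹ :=
      Real.rpow_neg hgp.le _
    rw [h1, Complex.ofReal_inv, inv_inv]
  -- MAIN INDUCTION
  have main : ∀ k : ℕ, ContDiffOn ℝ ∞ (A k) I ∧ Bnd b (γ - (k:ℝ)) (A k) := by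
    intro k
    induction k with
    | zero =>
      refine ⟨hA0cd, ?_⟩
      have h : γ - ((0:ℕ):ℝ) = γ := by simp
      rw [h]
      exact hA0B
    | succ k ih =>
      obtain ⟨hAcd, hAB⟩ := ih
      -- the integrand h_k
      have hHcd : ContDiffOn ℝ ∞ (fun y => iteratedDeriv 2 (A k) y * (A 0 y)⁻¹) I :=
        (contDiffOn_itd hI hAcd 2).mul hA0invcd
      have hD2B : Bnd b ((γ - (k:ℝ)) - 2) (iteratedDeriv 2 (A k)) := by
        have h := bnd_shift hAB 2
        have h2 : ((2:ℕ):ℝ) = 2 := by norm_num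
        rwa [h2] at h
      have hHB : Bnd b ((γ - (k:ℝ)) - 2) (fun y => iteratedDeriv 2 (A k) y * (A 0 y)⁻¹) := by
        intro j
        obtain ⟨C, hC0, hC⟩ := bound_mul hI hIb hb (contDiffOn_itd hI hAcd 2) hA0invcd
          (Or.inr hγ.le) j
          (fun i _ => bndAt_of_bnd hD2B i)
          (fun i _ => bndAt_of_bnd hA0invB i)
        have hk0 : (0:ℝ) ≤ (k:ℝ) := Nat.cast_nonneg k
        rw [min_eq_left (by linarith : (γ - (k:ℝ)) - 2 ≤ γ)] at hC
        exact ⟨C, hC0, hC⟩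
      -- the integral F
      have hμ : ((γ - (k:ℝ)) - 2) + 1 ≠ 0 := by
        intro h
        exact hγnotint (k+1) (by push_cast; linarith)
      obtain ⟨hFcd, hFB⟩ := bnd_integral hb hη hHcd hμ hHB
      -- A (k+1) = G * F
      set G : ℝ → ℂ := fun x => Complex.I / 2 * A 0 x with hGdef
      set F : ℝ → ℂ := fun x => ∫ y in x..b, iteratedDeriv 2 (A k) y * (A 0 y)⁻¹ with hFdef
      have hGcd : ContDiffOn ℝ ∞ G I := contDiffOn_const.mul hA0cd
      have hGB : Bnd b γ G := bnd_const_mul _ hA0B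
      have hGF : ∀ y, G y * F y = A (k+1) y := by
        intro y
        rw [hArec k y]
      have hprod : Bnd b (γ - ((k+1:ℕ):ℝ)) (fun y => G y * F y) := by
        have hmin : min γ (((γ - (k:ℝ)) - 2) + 1) = γ - ((k+1:ℕ):ℝ) := by
          have hk0 : (0:ℝ) ≤ (k:ℝ) := Nat.cast_nonneg k
          rw [min_eq_right (by linarith)]
          push_cast; ring
        intro j
        obtain ⟨C, hC0, hC⟩ := bound_mul hI hIb hb hGcd hFcd (Or.inl hγ.le) j
          (fun i _ => bndAt_of_bnd hGB i)
          (fun i _ => bndAt_of_bnd hFB i)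
        rw [hmin] at hC
        exact ⟨C, hC0, hC⟩
      constructor
      · exact (hGcd.mul hFcd).congr (fun y _ => (hGF y).symm)
      · exact bnd_congr hI hIb (fun y _ => hGF y) hprod
  -- conclusion
  intro k
  obtain ⟨_, hB⟩ := main k
  obtain ⟨C, hC0, hC⟩ := hB 0
  refine ⟨C, 0, 0, fun x hx => ?_⟩
  rw [pow_zero, mul_one]
  have h := hC x hx
  rw [iteratedDeriv_zero] at h
  have he : γ - (k:ℝ) - ((0:ℕ):ℝ) = γ - (k:ℝ) := by simp
  rw [he] at h
  exact h
end

section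
/- Let V(x) = x^γ W(x) with γ > 0, W smooth on [0,b], and E − V(y) ≥ δ > 0 on [0,b]. Define T_E(x) = ∫₀^x [√(E − V(y)) − √E] dy. Then T_E admits a generalized Taylor expansion at 0 with exponent set {mγ + n + 1 : m ≥ 1, n ≥ 0}. -/
open Set Finset

/-- Taylor expansion with remainder bound on a compact interval containing `0`,
inside an open set where the function is smooth. -/
lemma taylor_rem (U : Set ℝ) (hU : IsOpen U) (c d : ℝ) (hc : c ≤ 0) (hd : 0 ≤ d)
    (hJ : Set.Icc c d ⊆ U) :
    ∀ M : ℕ, ∀ g : ℝ → ℝ, ContDiffOn ℝ (⊤ : ℕ∞) g U → ∃ C : ℝ, 0 ≤ C ∧ ∀ t ∈ Set.Icc c d,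
      |g t - ∑ m ∈ Finset.range M, iteratedDeriv m g 0 / m.factorial * t ^ m| ≤ C * |t| ^ M := by
  have h0J : (0:ℝ) ∈ Set.Icc c d := ⟨hc, hd⟩
  intro M
  induction M with
  | zero =>
    intro g hg
    obtain ⟨C, hC⟩ := (isCompact_Icc (a := c) (b := d)).exists_bound_of_continuousOn
      (hg.continuousOn.mono hJ)
    refine ⟨max C 0, le_max_right _ _, fun t ht => ?_⟩
    simp only [Finset.range_zero, Finset.sum_empty, sub_zero, pow_zero, mul_one]
    exact le_trans (hC t ht) (le_max_left _ _)
  | succ M IH =>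
    intro f hf
    have hg : ContDiffOn ℝ (⊤ : ℕ∞) (deriv f) U := hf.deriv_of_isOpen hU (by simp)
    obtain ⟨C, hC0, hC⟩ := IH (deriv f) hg
    set a : ℕ → ℝ := fun m => iteratedDeriv m f 0 / m.factorial with ha
    set R : ℝ → ℝ := fun t => f t - ∑ m ∈ Finset.range (M+1), a m * t ^ m with hRdef
    have hR0 : R 0 = 0 := by
      simp only [hRdef]
      rw [Finset.sum_eq_single_of_mem 0 (Finset.mem_range.2 (Nat.succ_pos M))]
      · simp [ha, iteratedDeriv_zero]
      · intro m _ hm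
        simp [zero_pow hm]
    have hderiv : ∀ t ∈ U, HasDerivAt R
        (deriv f t - ∑ m ∈ Finset.range M, iteratedDeriv m (deriv f) 0 / m.factorial * t ^ m) t := by
      intro t ht
      have hft : HasDerivAt f (deriv f t) t :=
        ((hf.differentiableOn (by simp) t ht).differentiableAt (hU.mem_nhds ht)).hasDerivAt
      have hpoly : HasDerivAt (fun t => ∑ m ∈ Finset.range (M+1), a m * t ^ m)
          (∑ m ∈ Finset.range (M+1), a m * (m * t ^ (m-1))) t :=
        HasDerivAt.fun_sum (fun m _ => (hasDerivAt_pow m t).const_mul (a m))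
      have hsum : (∑ m ∈ Finset.range (M+1), a m * (m * t ^ (m-1)))
          = ∑ m ∈ Finset.range M, iteratedDeriv m (deriv f) 0 / m.factorial * t ^ m := by
        rw [Finset.sum_range_succ']
        simp only [Nat.cast_zero, zero_mul, mul_zero, add_zero]
        refine Finset.sum_congr rfl fun m _ => ?_
        have h1 : iteratedDeriv (m+1) f 0 = iteratedDeriv m (deriv f) 0 := by
          rw [iteratedDeriv_succ']
        simp only [ha, Nat.add_sub_cancel, h1]
        have hfac : ((m+1).factorial : ℝ) = (m+1) * m.factorial := by
          push_cast [Nat.factorial_succ]; ring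
        have hm0 : (m.factorial : ℝ) ≠ 0 := Nat.cast_ne_zero.2 m.factorial_ne_zero
        have hm1 : ((m:ℝ)+1) ≠ 0 := by positivity
        rw [hfac]
        field_simp
        push_cast
        ring
      rw [← hsum]
      exact hft.sub hpoly
    refine ⟨C, hC0, fun t ht => ?_⟩
    have hsub : Set.uIcc (0:ℝ) t ⊆ Set.Icc c d := by
      have h0' : (0:ℝ) ∈ Set.uIcc c d := by rwa [Set.uIcc_of_le (le_trans hc hd)]
      have ht' : t ∈ Set.uIcc c d := by rwa [Set.uIcc_of_le (le_trans hc hd)]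
      rw [← Set.uIcc_of_le (le_trans hc hd)]
      exact Set.uIcc_subset_uIcc h0' ht'
    have habs : ∀ x ∈ Set.uIcc (0:ℝ) t, |x| ≤ |t| := by
      intro x hx
      rcases le_total 0 t with h | h
      · rw [Set.uIcc_of_le h] at hx
        rw [abs_of_nonneg hx.1, abs_of_nonneg h]; exact hx.2
      · rw [Set.uIcc_of_ge h] at hx
        rw [abs_of_nonpos hx.2, abs_of_nonpos h]; linarith [hx.1]
    have key : ‖R t - R 0‖ ≤ (C * |t| ^ M) * ‖t - 0‖ := by
      apply Convex.norm_image_sub_le_of_norm_deriv_le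
        (fun x hx => ((hderiv x (hJ (hsub hx))).differentiableAt))
        (fun x hx => ?_) (convex_uIcc _ _) (Set.left_mem_uIcc) (Set.right_mem_uIcc)
      rw [(hderiv x (hJ (hsub hx))).deriv]
      calc ‖deriv f x - ∑ m ∈ Finset.range M, iteratedDeriv m (deriv f) 0 / m.factorial * x ^ m‖
          ≤ C * |x| ^ M := hC x (hsub hx)
        _ ≤ C * |t| ^ M :=
            mul_le_mul_of_nonneg_left (pow_le_pow_left₀ (abs_nonneg _) (habs x hx) M) hC0
    rw [hR0, sub_zero, sub_zero] at key
    calc |R t| ≤ C * |t| ^ M * ‖t‖ := key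
      _ = C * |t| ^ (M+1) := by rw [Real.norm_eq_abs, pow_succ]; ring


set_option maxHeartbeats 2000000 in
open MeasureTheory intervalIntegral in
/-- For `V(x) = x^γ W(x)` with `E - V ≥ δ > 0` on `[0,b]`, the function
`T_E(x) = ∫₀^x [√(E - V(y)) - √E] dy` admits a generalized Taylor expansion at `0`
with exponent set `{mγ + n + 1 : m ≥ 1, n ≥ 0}`. -/
theorem TE_gte (b γ E δ : ℝ) (hb : 0 < b) (hγ : 0 < γ) (hδ : 0 < δ)
    (W : ℝ → ℝ) (hW : ContDiff ℝ (⊤ : ℕ∞) W)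
    (hgap : ∀ y ∈ Set.Icc (0 : ℝ) b, δ ≤ E - y ^ γ * W y) :
    ∃ a : ℝ → ℂ,
      HasGTE b
        (fun x => ((∫ y in (0:ℝ)..x,
          (Real.sqrt (E - y ^ γ * W y) - Real.sqrt E) : ℝ) : ℂ))
        {t : ℝ | ∃ m n : ℕ, 1 ≤ m ∧ t = m * γ + n + 1} a := by
  classical
  have hE : δ ≤ E := by
    have := hgap 0 ⟨le_refl 0, hb.le⟩
    rwa [Real.zero_rpow hγ.ne', zero_mul, sub_zero] at this
  -- bound on W
  obtain ⟨S, hS⟩ := (isCompact_Icc (a := (0:ℝ)) (b := b)).exists_bound_of_continuousOn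
    hW.continuous.continuousOn
  have hS0 : 0 ≤ S := le_trans (norm_nonneg _) (hS 0 ⟨le_refl 0, hb.le⟩)
  set B : ℝ := b ^ γ * S with hBdef
  have hB0 : 0 ≤ B := mul_nonneg (Real.rpow_nonneg hb.le γ) hS0
  -- V bounds
  have hVabs : ∀ y ∈ Set.Icc (0:ℝ) b, |y ^ γ * W y| ≤ y ^ γ * S := by
    intro y hy
    rw [abs_mul, abs_of_nonneg (Real.rpow_nonneg hy.1 γ)]
    exact mul_le_mul_of_nonneg_left (hS y hy) (Real.rpow_nonneg hy.1 γ)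
  have hVB : ∀ y ∈ Set.Icc (0:ℝ) b, |y ^ γ * W y| ≤ B := by
    intro y hy
    refine le_trans (hVabs y hy) (mul_le_mul_of_nonneg_right ?_ hS0)
    exact Real.rpow_le_rpow hy.1 hy.2 hγ.le
  have hVmem : ∀ y ∈ Set.Icc (0:ℝ) b, y ^ γ * W y ∈ Set.Icc (-B-1) (E-δ) := by
    intro y hy
    constructor
    · have := (abs_le.1 (hVB y hy)).1; linarith
    · have := hgap y hy; linarith
  have hJU : Set.Icc (-B-1) (E-δ) ⊆ Set.Iio E := fun t ht => lt_of_le_of_lt ht.2 (by linarith)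
  -- smoothness of φ
  set φ : ℝ → ℝ := fun t => Real.sqrt (E - t) with hφdef
  have hφC : ContDiffOn ℝ (⊤ : ℕ∞) φ (Set.Iio E) := by
    intro t ht
    have h1 : ContDiffAt ℝ (⊤ : ℕ∞) Real.sqrt (E - t) :=
      Real.contDiffAt_sqrt (ne_of_gt (by simp only [Set.mem_Iio] at ht; linarith))
    have h2 : ContDiffAt ℝ (⊤ : ℕ∞) (fun t : ℝ => E - t) t := (contDiff_const.sub contDiff_id).contDiffAt
    exact (h1.comp t h2).contDiffWithinAt
  -- coefficients
  set c : ℕ → ℝ := fun m => iteratedDeriv m φ 0 / m.factorial with hcdef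
  set w : ℕ → ℕ → ℝ := fun m n => iteratedDeriv n (fun y => W y ^ m) 0 / n.factorial with hwdef
  have hc0 : c 0 = Real.sqrt E := by
    simp [hcdef, iteratedDeriv_zero, hφdef]
  set P : ℝ → Finset (ℕ × ℕ) := fun α =>
    ((Finset.range (⌈α/γ⌉₊+1)) ×ˢ (Finset.range (⌈α⌉₊+1))).filter
      (fun p => 1 ≤ p.1 ∧ (p.1:ℝ)*γ + (p.2:ℝ) + 1 = α) with hPdef
  have hPfull : ∀ (α : ℝ) (p : ℕ × ℕ), 1 ≤ p.1 → (p.1:ℝ)*γ + (p.2:ℝ) + 1 = α → p ∈ P α := by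
    intro α p hp1 hpα
    have hm : (p.1:ℝ)*γ < α := by
      have : (0:ℝ) ≤ (p.2:ℝ) := Nat.cast_nonneg _
      linarith
    have hmlt : (p.1:ℝ) < α/γ := (lt_div_iff₀ hγ).2 hm
    have hm2 : (p.1:ℝ) < (⌈α/γ⌉₊:ℝ) + 1 := lt_of_lt_of_le hmlt (by linarith [Nat.le_ceil (α/γ)])
    have hn : (p.2:ℝ) < α := by
      have h1 : (1:ℝ) ≤ (p.1:ℝ) := by exact_mod_cast hp1
      nlinarith
    have hn2 : (p.2:ℝ) < (⌈α⌉₊:ℝ) + 1 := lt_of_lt_of_le hn (by linarith [Nat.le_ceil α])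
    refine Finset.mem_filter.2 ⟨Finset.mem_product.2 ⟨Finset.mem_range.2 ?_, Finset.mem_range.2 ?_⟩,
      hp1, hpα⟩
    · exact_mod_cast hm2
    · exact_mod_cast hn2
  set aR : ℝ → ℝ := fun α => (∑ p ∈ P α, c p.1 * w p.1 p.2) / α with haRdef
  refine ⟨fun α => ((aR α : ℝ) : ℂ), ⟨0, fun t ht => ?_⟩, ?_⟩
  · obtain ⟨m, n, hm, rfl⟩ := ht
    positivity
  intro N
  -- exponent cutoff
  set r : ℝ := max ((N:ℝ) - 1) 0 with hrdef
  have hr0 : 0 ≤ r := le_max_right _ _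
  set M : ℕ := ⌈r/γ⌉₊ + 1 with hMdef
  set K : ℕ := ⌈r⌉₊ + 1 with hKdef
  have hMγ : r ≤ (M:ℝ) * γ := by
    have h1 : r/γ ≤ (M:ℝ) := by
      push_cast [hMdef]
      linarith [Nat.le_ceil (r/γ)]
    calc r = (r/γ) * γ := by field_simp
      _ ≤ (M:ℝ) * γ := mul_le_mul_of_nonneg_right h1 hγ.le
  have hKr : r ≤ (K:ℝ) := by
    push_cast [hKdef]
    linarith [Nat.le_ceil r]
  set Qrect : Finset (ℕ × ℕ) := (Finset.range M ×ˢ Finset.range K).filter (fun p => 1 ≤ p.1)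
    with hQrectdef
  set Q : Finset (ℕ × ℕ) := Qrect.filter (fun p => (p.1:ℝ)*γ + (p.2:ℝ) < r) with hQdef
  have hQfull : ∀ p : ℕ × ℕ, 1 ≤ p.1 → (p.1:ℝ)*γ + (p.2:ℝ) < r → p ∈ Q := by
    intro p hp1 hpr
    have hmγ : (p.1:ℝ)*γ < r := by
      have : (0:ℝ) ≤ (p.2:ℝ) := Nat.cast_nonneg _
      linarith
    have hmlt : (p.1:ℝ) < r/γ := (lt_div_iff₀ hγ).2 hmγ
    have hm2 : (p.1:ℝ) < (M:ℝ) := by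
      push_cast [hMdef]
      linarith [Nat.le_ceil (r/γ)]
    have hn2 : (p.2:ℝ) < (K:ℝ) := by
      have : (0:ℝ) ≤ (p.1:ℝ)*γ := by positivity
      push_cast [hKdef]
      linarith [Nat.le_ceil r]
    refine Finset.mem_filter.2 ⟨Finset.mem_filter.2 ⟨Finset.mem_product.2
      ⟨Finset.mem_range.2 ?_, Finset.mem_range.2 ?_⟩, hp1⟩, hpr⟩
    · exact_mod_cast hm2
    · exact_mod_cast hn2
  have hQelim : ∀ p ∈ Q, 1 ≤ p.1 ∧ (p.1:ℝ)*γ + (p.2:ℝ) < r := by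
    intro p hp
    have h1 := Finset.mem_filter.1 hp
    have h2 := Finset.mem_filter.1 h1.1
    exact ⟨h2.2, h1.2⟩
  have hcond : ∀ p : ℕ × ℕ, ((p.1:ℝ)*γ + (p.2:ℝ) < r ↔ (p.1:ℝ)*γ + (p.2:ℝ) + 1 < (N:ℝ)) := by
    intro p
    have he0 : (0:ℝ) ≤ (p.1:ℝ)*γ + (p.2:ℝ) := by positivity
    rcases Nat.eq_zero_or_pos N with hN | hN
    · have hr : r = 0 := by rw [hrdef, hN]; norm_num
      rw [hr, hN]
      push_cast
      constructor
      · intro h; exfalso; linarith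
      · intro h; exfalso; linarith
    · have hN1 : (1:ℝ) ≤ (N:ℝ) := by exact_mod_cast hN
      have : r = (N:ℝ) - 1 := max_eq_left (by linarith)
      rw [this]
      constructor <;> intro h <;> linarith
  -- the finset of exponents
  set s : Finset ℝ := Q.image (fun p => (p.1:ℝ)*γ + (p.2:ℝ) + 1) with hsdef
  have hs_spec : (↑s : Set ℝ) = {t : ℝ | ∃ m n : ℕ, 1 ≤ m ∧ t = m * γ + n + 1} ∩ Set.Iio (N:ℝ) := by
    ext α
    simp only [hsdef, Finset.coe_image, Set.mem_image, Finset.mem_coe, Set.mem_inter_iff,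
      Set.mem_setOf_eq, Set.mem_Iio]
    constructor
    · rintro ⟨p, hp, rfl⟩
      obtain ⟨hp1, hpr⟩ := hQelim p hp
      exact ⟨⟨p.1, p.2, hp1, rfl⟩, (hcond p).1 hpr⟩
    · rintro ⟨⟨m, n, hm, rfl⟩, hlt⟩
      refine ⟨(m, n), hQfull (m, n) hm ((hcond (m,n)).2 hlt), rfl⟩
  -- sum over s equals sum over Q
  have hsum : ∀ x : ℝ, (∑ α ∈ s, aR α * x ^ α)
      = ∑ p ∈ Q, (c p.1 * w p.1 p.2 / ((p.1:ℝ)*γ + (p.2:ℝ) + 1)) * x ^ ((p.1:ℝ)*γ + (p.2:ℝ) + 1) := by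
    intro x
    rw [hsdef]
    refine Finset.sum_image' _ (fun p hp => ?_)
    obtain ⟨hp1, hpr⟩ := hQelim p hp
    have hfilter : Q.filter (fun p' => (p'.1:ℝ)*γ + (p'.2:ℝ) + 1 = (p.1:ℝ)*γ + (p.2:ℝ) + 1)
        = P ((p.1:ℝ)*γ + (p.2:ℝ) + 1) := by
      ext p'
      constructor
      · intro hp'
        have h1 := Finset.mem_filter.1 hp'
        obtain ⟨hp'1, _⟩ := hQelim p' h1.1
        exact hPfull _ p' hp'1 h1.2
      · intro hp'
        have h1 := Finset.mem_filter.1 hp'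
        have hcondp' := h1.2
        refine Finset.mem_filter.2 ⟨?_, hcondp'.2⟩
        refine hQfull p' hcondp'.1 ?_
        have := hcondp'.2
        linarith
    rw [hfilter, haRdef]
    simp only
    rw [Finset.sum_div, Finset.sum_mul]
    refine Finset.sum_congr rfl (fun p' hp' => ?_)
    have h2 := (Finset.mem_filter.1 hp').2.2
    rw [← h2]
  -- helper: power comparison on (0,b]
  have hmono : ∀ x ∈ Set.Ioc (0:ℝ) b, ∀ ρ σ : ℝ, σ ≤ ρ → x ^ ρ ≤ b ^ (ρ - σ) * x ^ σ := by
    intro x hx ρ σ hσρ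
    have h1 : x ^ ρ = x ^ (ρ - σ) * x ^ σ := by
      rw [← Real.rpow_add hx.1]; ring_nf
    rw [h1]
    exact mul_le_mul_of_nonneg_right (Real.rpow_le_rpow hx.1.le hx.2 (by linarith))
      (Real.rpow_nonneg hx.1.le σ)
  -- Taylor estimate for φ
  obtain ⟨C₁, hC₁0, hC₁⟩ := taylor_rem (Set.Iio E) isOpen_Iio (-B-1) (E-δ) (by linarith)
    (by linarith) hJU M φ hφC
  have hC₁' : ∀ t ∈ Set.Icc (-B-1) (E-δ),
      |φ t - ∑ m ∈ Finset.range M, c m * t ^ m| ≤ C₁ * |t| ^ M := by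
    simpa only [hcdef] using hC₁
  -- Taylor estimates for powers of W
  have hWT : ∀ m : ℕ, ∃ C, 0 ≤ C ∧ ∀ y ∈ Set.Icc (0:ℝ) b,
      |W y ^ m - ∑ n ∈ Finset.range K, w m n * y ^ n| ≤ C * |y| ^ K := by
    intro m
    obtain ⟨C, hC0, hC⟩ := taylor_rem Set.univ isOpen_univ 0 b le_rfl hb.le (Set.subset_univ _) K
      (fun y => W y ^ m) (hW.pow m).contDiffOn
    refine ⟨C, hC0, ?_⟩
    simpa only [hwdef] using hC
  choose C₂ hC₂0 hC₂ using hWT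
  -- filtered complement of Q in Qrect
  set QN : Finset (ℕ × ℕ) := Qrect.filter (fun p => ¬ ((p.1:ℝ)*γ + (p.2:ℝ) < r)) with hQNdef
  -- the three constants
  set D1 : ℝ := C₁ * S ^ M * b ^ ((M:ℝ)*γ - r) with hD1def
  set D2 : ℝ := ∑ m ∈ Finset.Ico 1 M, |c m| * C₂ m * b ^ ((m:ℝ)*γ + (K:ℝ) - r) with hD2def
  set D3 : ℝ := ∑ p ∈ QN, |c p.1 * w p.1 p.2| * b ^ ((p.1:ℝ)*γ + (p.2:ℝ) - r) with hD3def
  have hD10 : 0 ≤ D1 := by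
    have : (0:ℝ) ≤ b ^ ((M:ℝ)*γ - r) := Real.rpow_nonneg hb.le _
    have : (0:ℝ) ≤ S ^ M := pow_nonneg hS0 M
    positivity
  have hD20 : 0 ≤ D2 := Finset.sum_nonneg fun m _ => by
    have := hC₂0 m
    have : (0:ℝ) ≤ b ^ ((m:ℝ)*γ + (K:ℝ) - r) := Real.rpow_nonneg hb.le _
    positivity
  have hD30 : 0 ≤ D3 := Finset.sum_nonneg fun p _ => by
    have : (0:ℝ) ≤ b ^ ((p.1:ℝ)*γ + (p.2:ℝ) - r) := Real.rpow_nonneg hb.le _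
    positivity
  -- the key pointwise estimate for the integrand
  have hkey : ∀ y ∈ Set.Ioc (0:ℝ) b,
      |(Real.sqrt (E - y ^ γ * W y) - Real.sqrt E)
        - ∑ p ∈ Q, c p.1 * w p.1 p.2 * y ^ ((p.1:ℝ)*γ + (p.2:ℝ))| ≤ (D1 + D2 + D3) * y ^ r := by
    intro y hy
    have hy0 : 0 < y := hy.1
    have hyb : y ≤ b := hy.2
    have hyIcc : y ∈ Set.Icc (0:ℝ) b := ⟨hy0.le, hyb⟩
    have hty : ∀ m : ℕ, (y ^ γ * W y) ^ m = y ^ ((m:ℝ)*γ) * W y ^ m := by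
      intro m
      rw [mul_pow, ← Real.rpow_natCast (y ^ γ) m, ← Real.rpow_mul hy0.le, mul_comm γ (m:ℝ)]
    -- A1 bound
    have hA1 : |φ (y ^ γ * W y) - ∑ m ∈ Finset.range M, c m * (y ^ γ * W y) ^ m| ≤ D1 * y ^ r := by
      calc |φ (y ^ γ * W y) - ∑ m ∈ Finset.range M, c m * (y ^ γ * W y) ^ m|
          ≤ C₁ * |y ^ γ * W y| ^ M := hC₁' _ (hVmem y hyIcc)
        _ ≤ C₁ * (y ^ γ * S) ^ M :=
            mul_le_mul_of_nonneg_left (pow_le_pow_left₀ (abs_nonneg _) (hVabs y hyIcc) M) hC₁0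
        _ = C₁ * S ^ M * y ^ ((M:ℝ)*γ) := by
            rw [mul_pow, ← Real.rpow_natCast (y ^ γ) M, ← Real.rpow_mul hy0.le, mul_comm γ (M:ℝ)]
            ring
        _ ≤ C₁ * S ^ M * (b ^ ((M:ℝ)*γ - r) * y ^ r) := by
            refine mul_le_mul_of_nonneg_left (hmono y hy _ _ hMγ) ?_
            have : (0:ℝ) ≤ S ^ M := pow_nonneg hS0 M
            positivity
        _ = D1 * y ^ r := by rw [hD1def]; ring
    -- A2 bound
    have hA2 : |∑ m ∈ Finset.Ico 1 M, c m * (y ^ γ * W y) ^ m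
        - ∑ m ∈ Finset.Ico 1 M, c m * (y ^ ((m:ℝ)*γ) * ∑ n ∈ Finset.range K, w m n * y ^ n)|
        ≤ D2 * y ^ r := by
      rw [← Finset.sum_sub_distrib]
      refine le_trans (Finset.abs_sum_le_sum_abs _ _) ?_
      rw [hD2def, Finset.sum_mul]
      refine Finset.sum_le_sum fun m _ => ?_
      have h1 : c m * (y ^ γ * W y) ^ m - c m * (y ^ ((m:ℝ)*γ) * ∑ n ∈ Finset.range K, w m n * y ^ n)
          = c m * y ^ ((m:ℝ)*γ) * (W y ^ m - ∑ n ∈ Finset.range K, w m n * y ^ n) := by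
        rw [hty m]; ring
      rw [h1, abs_mul, abs_mul, abs_of_nonneg (Real.rpow_nonneg hy0.le _)]
      have h2 : |W y ^ m - ∑ n ∈ Finset.range K, w m n * y ^ n| ≤ C₂ m * y ^ (K:ℝ) := by
        have := hC₂ m y hyIcc
        rwa [abs_of_nonneg hy0.le, ← Real.rpow_natCast y K] at this
      calc |c m| * y ^ ((m:ℝ)*γ) * |W y ^ m - ∑ n ∈ Finset.range K, w m n * y ^ n|
          ≤ |c m| * y ^ ((m:ℝ)*γ) * (C₂ m * y ^ (K:ℝ)) := by
            refine mul_le_mul_of_nonneg_left h2 ?_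
            have : (0:ℝ) ≤ y ^ ((m:ℝ)*γ) := Real.rpow_nonneg hy0.le _
            positivity
        _ = |c m| * C₂ m * y ^ ((m:ℝ)*γ + (K:ℝ)) := by
            rw [Real.rpow_add hy0]; ring
        _ ≤ |c m| * C₂ m * (b ^ ((m:ℝ)*γ + (K:ℝ) - r) * y ^ r) := by
            refine mul_le_mul_of_nonneg_left (hmono y hy _ _ ?_) ?_
            · have : (0:ℝ) ≤ (m:ℝ)*γ := by positivity
              linarith [hKr]
            · have := hC₂0 m
              positivity
        _ = |c m| * C₂ m * b ^ ((m:ℝ)*γ + (K:ℝ) - r) * y ^ r := by ring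
    -- middle sum equals sum over Qrect
    have hQrect_eq : Qrect = (Finset.Ico 1 M) ×ˢ (Finset.range K) := by
      ext p
      simp only [hQrectdef, Finset.mem_filter, Finset.mem_product, Finset.mem_range,
        Finset.mem_Ico]
      constructor
      · rintro ⟨⟨h1, h2⟩, h3⟩; exact ⟨⟨h3, h1⟩, h2⟩
      · rintro ⟨⟨h3, h1⟩, h2⟩; exact ⟨⟨h1, h2⟩, h3⟩
    have hmid : ∑ m ∈ Finset.Ico 1 M, c m * (y ^ ((m:ℝ)*γ) * ∑ n ∈ Finset.range K, w m n * y ^ n)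
        = ∑ p ∈ Qrect, c p.1 * w p.1 p.2 * y ^ ((p.1:ℝ)*γ + (p.2:ℝ)) := by
      rw [hQrect_eq, Finset.sum_product]
      refine Finset.sum_congr rfl fun m _ => ?_
      rw [Finset.mul_sum, Finset.mul_sum]
      refine Finset.sum_congr rfl fun n _ => ?_
      rw [Real.rpow_add hy0, Real.rpow_natCast]
      ring
    -- A3 bound
    have hA3 : |∑ p ∈ QN, c p.1 * w p.1 p.2 * y ^ ((p.1:ℝ)*γ + (p.2:ℝ))| ≤ D3 * y ^ r := by
      refine le_trans (Finset.abs_sum_le_sum_abs _ _) ?_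
      rw [hD3def, Finset.sum_mul]
      refine Finset.sum_le_sum fun p hp => ?_
      have hge : r ≤ (p.1:ℝ)*γ + (p.2:ℝ) := le_of_not_gt (Finset.mem_filter.1 hp).2
      rw [abs_mul, abs_of_nonneg (Real.rpow_nonneg hy0.le _)]
      calc |c p.1 * w p.1 p.2| * y ^ ((p.1:ℝ)*γ + (p.2:ℝ))
          ≤ |c p.1 * w p.1 p.2| * (b ^ ((p.1:ℝ)*γ + (p.2:ℝ) - r) * y ^ r) :=
            mul_le_mul_of_nonneg_left (hmono y hy _ _ hge) (abs_nonneg _)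
        _ = |c p.1 * w p.1 p.2| * b ^ ((p.1:ℝ)*γ + (p.2:ℝ) - r) * y ^ r := by ring
    -- splitting
    have hEsplit : (Real.sqrt (E - y ^ γ * W y) - Real.sqrt E)
        - ∑ p ∈ Q, c p.1 * w p.1 p.2 * y ^ ((p.1:ℝ)*γ + (p.2:ℝ))
        = (φ (y ^ γ * W y) - ∑ m ∈ Finset.range M, c m * (y ^ γ * W y) ^ m)
          + (∑ m ∈ Finset.Ico 1 M, c m * (y ^ γ * W y) ^ m
            - ∑ m ∈ Finset.Ico 1 M, c m * (y ^ ((m:ℝ)*γ) * ∑ n ∈ Finset.range K, w m n * y ^ n))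
          + ∑ p ∈ QN, c p.1 * w p.1 p.2 * y ^ ((p.1:ℝ)*γ + (p.2:ℝ)) := by
      have h1 : ∑ m ∈ Finset.range M, c m * (y ^ γ * W y) ^ m
          = Real.sqrt E + ∑ m ∈ Finset.Ico 1 M, c m * (y ^ γ * W y) ^ m := by
        rw [Finset.range_eq_Ico, Finset.sum_eq_sum_Ico_succ_bot (by omega : 0 < M)]
        simp [hc0]
      have h2 : ∑ p ∈ Q, c p.1 * w p.1 p.2 * y ^ ((p.1:ℝ)*γ + (p.2:ℝ))
            + ∑ p ∈ QN, c p.1 * w p.1 p.2 * y ^ ((p.1:ℝ)*γ + (p.2:ℝ))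
          = ∑ p ∈ Qrect, c p.1 * w p.1 p.2 * y ^ ((p.1:ℝ)*γ + (p.2:ℝ)) := by
        rw [hQdef, hQNdef]
        exact Finset.sum_filter_add_sum_filter_not Qrect _ _
      have hφy : φ (y ^ γ * W y) = Real.sqrt (E - y ^ γ * W y) := by rw [hφdef]
      rw [hφy] at *
      linarith [hmid, h1, h2]
    rw [hEsplit]
    refine le_trans (abs_add_le _ _) ?_
    refine le_trans (add_le_add (le_trans (abs_add_le _ _) (add_le_add hA1 hA2)) hA3) ?_
    exact le_of_eq (by ring)
  -- continuity facts
  have hrpow_cont : ∀ ρ : ℝ, 0 ≤ ρ → Continuous (fun y : ℝ => y ^ ρ) := fun ρ hρ =>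
    continuous_iff_continuousAt.2 fun y => Real.continuousAt_rpow_const y ρ (Or.inr hρ)
  have hVcont : Continuous (fun y : ℝ => y ^ γ * W y) := (hrpow_cont γ hγ.le).mul hW.continuous
  have hhcont : Continuous (fun y => Real.sqrt (E - y ^ γ * W y) - Real.sqrt E) :=
    (Real.continuous_sqrt.comp (continuous_const.sub hVcont)).sub continuous_const
  have hecont : ∀ p : ℕ × ℕ,
      Continuous (fun y : ℝ => c p.1 * w p.1 p.2 * y ^ ((p.1:ℝ)*γ + (p.2:ℝ))) := by
    intro p
    refine continuous_const.mul (hrpow_cont _ ?_)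
    have h1 : (0:ℝ) ≤ (p.1:ℝ)*γ := mul_nonneg (Nat.cast_nonneg _) hγ.le
    have h2 : (0:ℝ) ≤ (p.2:ℝ) := Nat.cast_nonneg _
    linarith
  have hsumcont : Continuous (fun y : ℝ => ∑ p ∈ Q,
      c p.1 * w p.1 p.2 * y ^ ((p.1:ℝ)*γ + (p.2:ℝ))) :=
    continuous_finset_sum Q fun p _ => hecont p
  -- conclusion
  refine ⟨s, (D1 + D2 + D3) / (r + 1) * b ^ (r + 1 - (N:ℝ)), hs_spec, fun x hx => ?_⟩
  have hx0 : 0 < x := hx.1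
  have hxb : x ≤ b := hx.2
  have hr1 : (0:ℝ) < r + 1 := by linarith
  -- rewrite difference of integral and partial sum as an integral
  have hint : (∫ y in (0:ℝ)..x, (Real.sqrt (E - y ^ γ * W y) - Real.sqrt E))
      - ∑ α ∈ s, aR α * x ^ α
      = ∫ y in (0:ℝ)..x, ((Real.sqrt (E - y ^ γ * W y) - Real.sqrt E)
          - ∑ p ∈ Q, c p.1 * w p.1 p.2 * y ^ ((p.1:ℝ)*γ + (p.2:ℝ))) := by
    rw [intervalIntegral.integral_sub (hhcont.intervalIntegrable 0 x)
      (hsumcont.intervalIntegrable 0 x)]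
    congr 1
    rw [hsum x, intervalIntegral.integral_finset_sum
      (fun p _ => (hecont p).intervalIntegrable 0 x)]
    refine Finset.sum_congr rfl fun p hp => ?_
    have h1 : (0:ℝ) ≤ (p.1:ℝ)*γ := mul_nonneg (Nat.cast_nonneg _) hγ.le
    have h2 : (0:ℝ) ≤ (p.2:ℝ) := Nat.cast_nonneg _
    have he0 : (0:ℝ) < (p.1:ℝ)*γ + (p.2:ℝ) + 1 := by linarith
    rw [intervalIntegral.integral_const_mul, integral_rpow (Or.inl (by linarith :
      (-1:ℝ) < (p.1:ℝ)*γ + (p.2:ℝ))), Real.zero_rpow (ne_of_gt he0)]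
    ring
  -- pointwise bound on [0, x]
  have hptwise : ∀ y ∈ Set.Icc (0:ℝ) x,
      |(Real.sqrt (E - y ^ γ * W y) - Real.sqrt E)
        - ∑ p ∈ Q, c p.1 * w p.1 p.2 * y ^ ((p.1:ℝ)*γ + (p.2:ℝ))| ≤ (D1 + D2 + D3) * y ^ r := by
    intro y hy
    rcases eq_or_lt_of_le hy.1 with h0 | h0
    · rw [← h0]
      have hz : Real.sqrt (E - (0:ℝ) ^ γ * W 0) - Real.sqrt E = 0 := by
        rw [Real.zero_rpow hγ.ne', zero_mul, sub_zero, sub_self]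
      have hzs : ∑ p ∈ Q, c p.1 * w p.1 p.2 * (0:ℝ) ^ ((p.1:ℝ)*γ + (p.2:ℝ)) = 0 := by
        refine Finset.sum_eq_zero fun p hp => ?_
        obtain ⟨hp1, _⟩ := hQelim p hp
        have h1 : (1:ℝ) ≤ (p.1:ℝ) := by exact_mod_cast hp1
        have h2 : (0:ℝ) ≤ (p.2:ℝ) := Nat.cast_nonneg _
        have : (0:ℝ) < (p.1:ℝ)*γ + (p.2:ℝ) := by nlinarith
        rw [Real.zero_rpow (ne_of_gt this), mul_zero]
      rw [hz, hzs, sub_zero, abs_zero]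
      exact mul_nonneg (by linarith) (Real.rpow_nonneg le_rfl r)
    · exact hkey y ⟨h0, le_trans hy.2 hxb⟩
  -- integral bound
  have hbound : |∫ y in (0:ℝ)..x, ((Real.sqrt (E - y ^ γ * W y) - Real.sqrt E)
      - ∑ p ∈ Q, c p.1 * w p.1 p.2 * y ^ ((p.1:ℝ)*γ + (p.2:ℝ)))|
      ≤ (D1 + D2 + D3) * (x ^ (r+1) / (r+1)) := by
    refine le_trans (intervalIntegral.abs_integral_le_integral_abs hx0.le) ?_
    have hI1 : IntervalIntegrable (fun y => |(Real.sqrt (E - y ^ γ * W y) - Real.sqrt E)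
        - ∑ p ∈ Q, c p.1 * w p.1 p.2 * y ^ ((p.1:ℝ)*γ + (p.2:ℝ))|) volume 0 x :=
      ((hhcont.sub hsumcont).abs).intervalIntegrable 0 x
    have hI2 : IntervalIntegrable (fun y => (D1 + D2 + D3) * y ^ r) volume 0 x :=
      (continuous_const.mul (hrpow_cont r hr0)).intervalIntegrable 0 x
    refine le_trans (intervalIntegral.integral_mono_on hx0.le hI1 hI2 hptwise) ?_
    rw [intervalIntegral.integral_const_mul, integral_rpow (Or.inl (by linarith : (-1:ℝ) < r)),
      Real.zero_rpow (ne_of_gt hr1)]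
    refine le_of_eq ?_
    ring
  -- final estimate
  have hNr : (N:ℝ) ≤ r + 1 := by
    have := le_max_left ((N:ℝ) - 1) 0
    rw [← hrdef] at this
    linarith
  have hxpow : x ^ (r+1) ≤ b ^ (r + 1 - (N:ℝ)) * x ^ (N:ℝ) := hmono x hx _ _ hNr
  have hfinal : (D1 + D2 + D3) * (x ^ (r+1) / (r+1))
      ≤ (D1 + D2 + D3) / (r + 1) * b ^ (r + 1 - (N:ℝ)) * x ^ (N:ℝ) := by
    have hc' : 0 ≤ (D1 + D2 + D3) / (r + 1) := div_nonneg (by linarith) hr1.le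
    calc (D1 + D2 + D3) * (x ^ (r+1) / (r+1))
        = (D1 + D2 + D3) / (r + 1) * x ^ (r+1) := by ring
      _ ≤ (D1 + D2 + D3) / (r + 1) * (b ^ (r + 1 - (N:ℝ)) * x ^ (N:ℝ)) :=
          mul_le_mul_of_nonneg_left hxpow hc'
      _ = (D1 + D2 + D3) / (r + 1) * b ^ (r + 1 - (N:ℝ)) * x ^ (N:ℝ) := by ring
  -- cast to ℂ
  have hcast : ((∫ y in (0:ℝ)..x, (Real.sqrt (E - y ^ γ * W y) - Real.sqrt E) : ℝ) : ℂ)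
      - ∑ α ∈ s, ((aR α : ℝ) : ℂ) * ((x ^ α : ℝ) : ℂ)
      = (((∫ y in (0:ℝ)..x, (Real.sqrt (E - y ^ γ * W y) - Real.sqrt E))
          - ∑ α ∈ s, aR α * x ^ α : ℝ) : ℂ) := by
    push_cast
    ring
  show ‖((∫ y in (0:ℝ)..x, (Real.sqrt (E - y ^ γ * W y) - Real.sqrt E) : ℝ) : ℂ)
      - ∑ α ∈ s, ((aR α : ℝ) : ℂ) * ((x ^ α : ℝ) : ℂ)‖ ≤ _
  rw [hcast, Complex.norm_real, Real.norm_eq_abs, hint]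
  exact le_trans hbound hfinal
end
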